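/- arXiv:1910.09944 — 5 statements merged into one kernel-verified Lean document; each statement's English description precedes it below -/
import Mathlib

section
/- Let d ∈ ℕ and let 𝒲 = (w^λ)_{λ>0} be a weight function system on ℝ^d satisfying (wM) and (N). Then for every λ > 0 there exists μ > 0 such that the function x ↦ w^λ(x)/w^μ(x) is Lebesgue integrable on ℝ^d and tends to 0 as |x| → ∞. -/
/-
Proof idea: apply (wM) to `λ`, then (N), then (wM) once more, to get `λ ≥ μ₁ ≥ μ₂ ≥ μ₃` such that
`w^{μ₁}/w^{μ₂}` is integrable and `w^λ(x)/w^{μ₃}(x) ≤ C w^{μ₁}(z)/w^{μ₂}(z)` whenever `|z - x| ≤ 1`.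
Taking `z = x` gives integrability; averaging over the unit ball around `x` bounds `w^λ/w^{μ₃}`
at `x` by a multiple of the integral of `w^{μ₁}/w^{μ₂}` over that ball, which tends to `0` as
`|x| → ∞` because the ball escapes every compact set.
-/

open MeasureTheory Filter ENNReal Asymptotics

noncomputable section

/-- Partial derivative in the `i`-th coordinate direction. -/
def pd (d : ℕ) (i : Fin d) (f : EuclideanSpace ℝ (Fin d) → ℂ) :
    EuclideanSpace ℝ (Fin d) → ℂ :=
  fun x => fderiv ℝ f x (EuclideanSpace.single i 1)

/-- Iterated partial derivative in the `i`-th coordinate direction. -/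
def pdPow (d : ℕ) (i : Fin d) :
    ℕ → (EuclideanSpace ℝ (Fin d) → ℂ) → EuclideanSpace ℝ (Fin d) → ℂ
  | 0, f => f
  | n + 1, f => pd d i (pdPow d i n f)

/-- Mixed partial derivative `∂^α` for a multi-index `α : Fin d → ℕ`. -/
def pdMulti (d : ℕ) (α : Fin d → ℕ) (f : EuclideanSpace ℝ (Fin d) → ℂ) :
    EuclideanSpace ℝ (Fin d) → ℂ :=
  (List.finRange d).foldr (fun i g => pdPow d i (α i) g) f

/-- The Gelfand–Shilov seminorm `‖φ‖_{𝒮^M_{w,q}}`, as an `ℝ≥0∞`-valued quantity: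
`sup_α ‖(∂^α φ)·w‖_{L^q} / M_α`. -/
def gsNorm (d : ℕ) (M : (Fin d → ℕ) → ℝ) (w : EuclideanSpace ℝ (Fin d) → ℝ)
    (q : ℝ≥0∞) (φ : EuclideanSpace ℝ (Fin d) → ℂ) : ℝ≥0∞ :=
  ⨆ α : Fin d → ℕ,
    eLpNorm (fun x => ‖pdMulti d α φ x‖ * w x) q volume / ENNReal.ofReal (M α)

/-- The lattice point of `ℤ^d` inside `ℝ^d`. -/
def intPt (d : ℕ) (j : Fin d → ℤ) : EuclideanSpace ℝ (Fin d) :=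
  (WithLp.equiv 2 (Fin d → ℝ)).symm fun i => (j i : ℝ)

/-- The associated function `ω_M(x) = sup_α log (|x^α| M_0 / M_α)` of a (multi-indexed)
sequence `M`. -/
def assocFun (d : ℕ) (M : (Fin d → ℕ) → ℝ) (x : EuclideanSpace ℝ (Fin d)) : ℝ :=
  ⨆ α : Fin d → ℕ, Real.log ((∏ i, |x i| ^ α i) * M 0 / M α)

/-- `w` is a weight function system on `ℝ^d`: each `w λ` (for `λ > 0`) is continuous, `≥ 1`,
and `w λ ≤ w μ` pointwise whenever `μ ≤ λ`. -/
structure IsWFS (d : ℕ) (w : ℝ → EuclideanSpace ℝ (Fin d) → ℝ) : Prop where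
  cont : ∀ l, 0 < l → Continuous (w l)
  one_le : ∀ l, 0 < l → ∀ x, 1 ≤ w l x
  mono : ∀ m l, 0 < m → m ≤ l → ∀ x, w l x ≤ w m x

/-- Condition (wM) (Beurling) for a weight function system. -/
def WFS_wM_B (d : ℕ) (w : ℝ → EuclideanSpace ℝ (Fin d) → ℝ) : Prop :=
  ∀ l, 0 < l → ∃ m, 0 < m ∧ ∃ C, 0 < C ∧
    ∀ x y : EuclideanSpace ℝ (Fin d), ‖y‖ ≤ 1 → w l (x + y) ≤ C * w m x

/-- Condition {wM} (Roumieu) for a weight function system. -/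
def WFS_wM_R (d : ℕ) (w : ℝ → EuclideanSpace ℝ (Fin d) → ℝ) : Prop :=
  ∀ m, 0 < m → ∃ l, 0 < l ∧ ∃ C, 0 < C ∧
    ∀ x y : EuclideanSpace ℝ (Fin d), ‖y‖ ≤ 1 → w l (x + y) ≤ C * w m x

/-- Condition (M) (Beurling) for a weight function system. -/
def WFS_M_B (d : ℕ) (w : ℝ → EuclideanSpace ℝ (Fin d) → ℝ) : Prop :=
  ∀ l, 0 < l → ∃ m, 0 < m ∧ ∃ n, 0 < n ∧ ∃ C, 0 < C ∧
    ∀ x y : EuclideanSpace ℝ (Fin d), w l (x + y) ≤ C * w m x * w n y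

/-- Condition (N) (Beurling) for a weight function system. -/
def WFS_N_B (d : ℕ) (w : ℝ → EuclideanSpace ℝ (Fin d) → ℝ) : Prop :=
  ∀ l, 0 < l → ∃ m, 0 < m ∧ Integrable (fun x => w l x / w m x) volume

/-- Condition {N} (Roumieu) for a weight function system. -/
def WFS_N_R (d : ℕ) (w : ℝ → EuclideanSpace ℝ (Fin d) → ℝ) : Prop :=
  ∀ m, 0 < m → ∃ l, 0 < l ∧ Integrable (fun x => w l x / w m x) volume

/-- `M` is a weight sequence system on `ℝ^d`: each `M λ` (for `λ > 0`) is a positive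
sequence with `(M^λ_α)^{1/|α|} → ∞` satisfying the log-convexity condition (M.1), and
`M^λ_α ≤ M^μ_α` whenever `λ ≤ μ`. -/
structure IsWSS (d : ℕ) (M : ℝ → (Fin d → ℕ) → ℝ) : Prop where
  pos : ∀ l, 0 < l → ∀ α, 0 < M l α
  growth : ∀ l, 0 < l → ∀ R : ℝ, 0 < R → ∃ N : ℕ, ∀ α : Fin d → ℕ,
    N ≤ ∑ i, α i → R ^ (∑ i, α i) ≤ M l α
  logconvex : ∀ l, 0 < l → ∀ (α : Fin d → ℕ) (j : Fin d),
    M l (α + Pi.single j 1) ^ 2 ≤ M l α * M l (α + Pi.single j 2)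
  mono : ∀ l m, 0 < l → l ≤ m → ∀ α, M l α ≤ M m α

/-- Condition (L) (Beurling) for a weight sequence system. -/
def WSS_L_B (d : ℕ) (M : ℝ → (Fin d → ℕ) → ℝ) : Prop :=
  ∀ R : ℝ, 0 < R → ∀ l, 0 < l → ∃ m, 0 < m ∧ ∃ C, 0 < C ∧
    ∀ α : Fin d → ℕ, R ^ (∑ i, α i) * M m α ≤ C * M l α

/-- Condition {L} (Roumieu) for a weight sequence system. -/
def WSS_L_R (d : ℕ) (M : ℝ → (Fin d → ℕ) → ℝ) : Prop :=
  ∀ R : ℝ, 0 < R → ∀ m, 0 < m → ∃ l, 0 < l ∧ ∃ C, 0 < C ∧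
    ∀ α : Fin d → ℕ, R ^ (∑ i, α i) * M m α ≤ C * M l α

/-- Condition (𝔐.2)' (Beurling) for a weight sequence system. -/
def WSS_M2_B (d : ℕ) (M : ℝ → (Fin d → ℕ) → ℝ) : Prop :=
  ∀ l, 0 < l → ∃ m, 0 < m ∧ ∃ C, 0 < C ∧ ∃ H, 0 < H ∧
    ∀ (α : Fin d → ℕ) (j : Fin d),
      M m (α + Pi.single j 1) ≤ C * H ^ (∑ i, α i) * M l α

/-- Condition {𝔐.2}' (Roumieu) for a weight sequence system. -/
def WSS_M2_R (d : ℕ) (M : ℝ → (Fin d → ℕ) → ℝ) : Prop :=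
  ∀ m, 0 < m → ∃ l, 0 < l ∧ ∃ C, 0 < C ∧ ∃ H, 0 < H ∧
    ∀ (α : Fin d → ℕ) (j : Fin d),
      M l (α + Pi.single j 1) ≤ C * H ^ (∑ i, α i) * M m α

/-- A weight sequence system is accelerating if `M^λ_{α+e_j}/M^λ_α ≤ M^μ_{α+e_j}/M^μ_α`
for `λ ≤ μ`. -/
def WSSAccel (d : ℕ) (M : ℝ → (Fin d → ℕ) → ℝ) : Prop :=
  ∀ l m, 0 < l → l ≤ m → ∀ (α : Fin d → ℕ) (j : Fin d),
    M l (α + Pi.single j 1) / M l α ≤ M m (α + Pi.single j 1) / M m α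

/-- A weight sequence system is isotropically decomposable: there is a partition of the `d`
coordinates into `k` blocks (equivalently, after a permutation of the coordinates, a
decomposition `ℕ^d = ℕ^{d_1} × ⋯ × ℕ^{d_k}`) and positive functions `m^λ_j : ℕ → (0,∞)` with
`M^λ_α = ∏_j m^λ_j (|α^{(j)}|)`. -/
def IsoDecomposable (d : ℕ) (M : ℝ → (Fin d → ℕ) → ℝ) : Prop :=
  ∃ (k : ℕ) (b : Fin d → Fin k) (m : ℝ → Fin k → ℕ → ℝ),
    (∀ l, 0 < l → ∀ j n, 0 < m l j n) ∧
    ∀ l, 0 < l → ∀ α : Fin d → ℕ,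
      M l α = ∏ j, m l j (∑ i ∈ Finset.univ.filter fun i => b i = j, α i)

/-- Membership in the Beurling Gelfand–Shilov class `𝒮^{(𝔐)}_{(𝒲),q}`. -/
def gsBeurling (d : ℕ) (M : ℝ → (Fin d → ℕ) → ℝ) (w : ℝ → EuclideanSpace ℝ (Fin d) → ℝ)
    (q : ℝ≥0∞) (φ : EuclideanSpace ℝ (Fin d) → ℂ) : Prop :=
  ContDiff ℝ (⊤ : ℕ∞) φ ∧ ∀ l, 0 < l → gsNorm d (M l) (w l) q φ < ⊤

/-- Membership in the Roumieu Gelfand–Shilov class `𝒮^{{𝔐}}_{{𝒲},q}`. -/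
def gsRoumieu (d : ℕ) (M : ℝ → (Fin d → ℕ) → ℝ) (w : ℝ → EuclideanSpace ℝ (Fin d) → ℝ)
    (q : ℝ≥0∞) (φ : EuclideanSpace ℝ (Fin d) → ℂ) : Prop :=
  ContDiff ℝ (⊤ : ℕ∞) φ ∧ ∃ l, 0 < l ∧ gsNorm d (M l) (w l) q φ < ⊤

/-- Membership in the auxiliary space `𝒮̃^{(𝔐)}_{(𝒲)}`. -/
def gsTilde (d : ℕ) (M : ℝ → (Fin d → ℕ) → ℝ) (w : ℝ → EuclideanSpace ℝ (Fin d) → ℝ)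
    (ψ : EuclideanSpace ℝ (Fin d) → ℂ) : Prop :=
  ContDiff ℝ (⊤ : ℕ∞) ψ ∧ ∀ l, 0 < l → ∀ k : ℕ, ∃ C : ℝ,
    ∀ (α : Fin d → ℕ) (x : EuclideanSpace ℝ (Fin d)),
      ‖pdMulti d α ψ x‖ * (1 + ‖x‖) ^ k * w l x / M l α ≤ C

end

open Metric Set Topology

section

variable {E F : Type*} [PseudoMetricSpace E] [MeasurableSpace E] [OpensMeasurableSpace E]
  [NormedAddCommGroup F] [NormedSpace ℝ F] {μ : Measure E} {g : E → F}

theorem MeasureTheory.Integrable.tendsto_setIntegral_compl_ball (hg : Integrable g μ) (c : E) :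
    Tendsto (fun R : ℝ => ∫ z in (ball c R)ᶜ, g z ∂μ) atTop (𝓝 0) := by
  have h_empty : ⋂ R : ℝ, (ball c R)ᶜ = ∅ := by
    rw [← compl_iUnion, compl_empty_iff, iUnion_eq_univ_iff]
    exact fun z => exists_gt (dist z c)
  simpa [h_empty] using tendsto_setIntegral_of_antitone (s := fun R : ℝ => (ball c R)ᶜ)
    (fun R => measurableSet_ball.compl)
    (fun R S hRS => compl_subset_compl.mpr (ball_subset_ball hRS)) ⟨0, hg.integrableOn⟩

theorem MeasureTheory.Integrable.tendsto_setIntegral_ball_cocompact [ProperSpace E]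
    (hg : Integrable g μ) (r : ℝ) :
    Tendsto (fun x => ∫ z in ball x r, g z ∂μ) (cocompact E) (𝓝 0) := by
  rcases isEmpty_or_nonempty E with hE | ⟨⟨c⟩⟩
  · exact tendsto_of_isEmpty
  have h_far : ∀ x, ball x r ⊆ (ball c (dist x c - r))ᶜ := fun x z hz => by
    have := dist_triangle x z c
    rw [mem_ball'] at hz
    simp only [mem_compl_iff, mem_ball, not_lt]
    linarith
  refine squeeze_zero_norm (fun x => ?_) ((hg.norm.tendsto_setIntegral_compl_ball c).comp
    (tendsto_atTop_add_const_right _ (-r) (tendsto_dist_right_cocompact_atTop c)))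
  calc ‖∫ z in ball x r, g z ∂μ‖ ≤ ∫ z in ball x r, ‖g z‖ ∂μ := norm_integral_le_integral_norm _
    _ ≤ ∫ z in (ball c (dist x c - r))ᶜ, ‖g z‖ ∂μ :=
      setIntegral_mono_set hg.norm.integrableOn (ae_of_all _ fun z => norm_nonneg _)
        (h_far x).eventuallyLE
    _ = _ := by simp [sub_eq_add_neg]

end

theorem MeasureTheory.Integrable.tendsto_cocompact_zero_of_le_mul_on_ball {E : Type*}
    [NormedAddCommGroup E] [ProperSpace E] [MeasurableSpace E] [BorelSpace E] (μ : Measure E)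
    [μ.IsAddHaarMeasure] {f g : E → ℝ} {C r : ℝ} (hr : 0 < r) (hg : Integrable g μ)
    (hf : 0 ≤ f) (hfg : ∀ x z, dist z x < r → f x ≤ C * g z) :
    Tendsto f (cocompact E) (𝓝 0) := by
  set V := μ.real (ball (0 : E) r)
  have hV : 0 < V := ENNReal.toReal_pos (measure_ball_pos μ 0 hr).ne' measure_ball_lt_top.ne
  have h_avg : ∀ x, f x ≤ C / V * ∫ z in ball x r, g z ∂μ := fun x => by
    have : V * f x ≤ C * ∫ z in ball x r, g z ∂μ :=
      calc V * f x = ∫ _ in ball x r, f x ∂μ := by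
            rw [setIntegral_const, smul_eq_mul, Measure.addHaar_real_ball_center]
        _ ≤ ∫ z in ball x r, C * g z ∂μ :=
            setIntegral_mono_on (integrableOn_const measure_ball_lt_top.ne)
              (hg.const_mul C).integrableOn measurableSet_ball fun z => hfg x z
        _ = C * ∫ z in ball x r, g z ∂μ := integral_const_mul C _
    rw [div_mul_eq_mul_div, le_div_iff₀ hV]
    linarith
  refine squeeze_zero hf h_avg ?_
  simpa using (hg.tendsto_setIntegral_ball_cocompact r).const_mul (C / V)

theorem IsWFS.pos {d : ℕ} {w : ℝ → EuclideanSpace ℝ (Fin d) → ℝ} (hW : IsWFS d w) {l : ℝ}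
    (hl : 0 < l) (x : EuclideanSpace ℝ (Fin d)) : 0 < w l x :=
  one_pos.trans_le (hW.one_le l hl x)

theorem IsWFS.div_le_mul_div_of_dist_le {d : ℕ} {w : ℝ → EuclideanSpace ℝ (Fin d) → ℝ} (hW : IsWFS d w)
    {l m₁ m₂ m₃ C₁ C₃ : ℝ} (hl : 0 < l) (hm₂ : 0 < m₂) (hm₃ : 0 < m₃)
    (h₁ : ∀ x y : EuclideanSpace ℝ (Fin d), ‖y‖ ≤ 1 → w l (x + y) ≤ C₁ * w m₁ x)
    (h₃ : ∀ x y : EuclideanSpace ℝ (Fin d), ‖y‖ ≤ 1 → w m₂ (x + y) ≤ C₃ * w m₃ x)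
    {x z : EuclideanSpace ℝ (Fin d)} (hzx : dist z x ≤ 1) :
    w l x / w m₃ x ≤ C₁ * C₃ * (w m₁ z / w m₂ z) := by
  have hl' : w l x ≤ C₁ * w m₁ z := by
    simpa using h₁ z (x - z) (by rwa [← dist_eq_norm, dist_comm])
  have hm₂' : w m₂ z ≤ C₃ * w m₃ x := by
    simpa using h₃ x (z - x) (by rwa [← dist_eq_norm])
  rw [mul_div_assoc', div_le_div_iff₀ (hW.pos hm₃ x) (hW.pos hm₂ z)]
  calc w l x * w m₂ z ≤ (C₁ * w m₁ z) * (C₃ * w m₃ x) :=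
        mul_le_mul hl' hm₂' (hW.pos hm₂ z).le ((hW.pos hl x).le.trans hl')
    _ = C₁ * C₃ * w m₁ z * w m₃ x := by ring

/-- If a weight function system `𝒲` on `ℝ^d` satisfies (wM) and (N), then for every `λ > 0`
there is `μ > 0` such that `w^λ/w^μ` is integrable and tends to `0` at infinity. -/
theorem stmt0 (d : ℕ) (w : ℝ → EuclideanSpace ℝ (Fin d) → ℝ)
    (hW : IsWFS d w) (hwM : WFS_wM_B d w) (hN : WFS_N_B d w) :
    ∀ l, 0 < l → ∃ m, 0 < m ∧
      Integrable (fun x => w l x / w m x) volume ∧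
      Tendsto (fun x => w l x / w m x) (cocompact (EuclideanSpace ℝ (Fin d))) (nhds 0) := by
  intro l hl
  obtain ⟨m₁, hm₁, C₁, -, h₁⟩ := hwM l hl
  obtain ⟨m₂, hm₂, hg⟩ := hN m₁ hm₁
  obtain ⟨m₃, hm₃, C₃, -, h₃⟩ := hwM m₂ hm₂
  have h_near : ∀ x z, dist z x < 1 → w l x / w m₃ x ≤ C₁ * C₃ * (w m₁ z / w m₂ z) :=
    fun x z hzx => hW.div_le_mul_div_of_dist_le hl hm₂ hm₃ h₁ h₃ hzx.le
  have h_nonneg : 0 ≤ fun x => w l x / w m₃ x :=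
    fun x => (div_pos (hW.pos hl x) (hW.pos hm₃ x)).le
  refine ⟨m₃, hm₃, ?_, hg.tendsto_cocompact_zero_of_le_mul_on_ball volume one_pos h_nonneg h_near⟩
  refine (hg.const_mul (C₁ * C₃)).mono' ?_ (ae_of_all _ fun x => ?_)
  · exact ((hW.cont l hl).div (hW.cont m₃ hm₃) fun x => (hW.pos hm₃ x).ne').aestronglyMeasurable
  · rw [Real.norm_of_nonneg (h_nonneg x)]
    exact h_near x x (by simp)
end

section
/- Let 𝔐 = (M^λ)_{λ>0} be an isotropically decomposable weight sequence system on ℝ^d satisfying (L). Then the associated weight function system 𝒲_𝔐 = (e^{ω_{M^λ}})_{λ>0} satisfies (M): for every λ > 0 there exist μ, ν > 0 and C > 0 such that ω_{M^λ}(x+y) ≤ ω_{M^μ}(x) + ω_{M^ν}(y) + log C for all x, y ∈ ℝ^d. -/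
open MeasureTheory Filter ENNReal Asymptotics

private lemma onedim (g : ℕ → ℝ) (hg : ∀ n, 0 < g n)
    (hc : ∀ n, g (n+1) ^ 2 ≤ g n * g (n+2)) :
    ∀ p q, g p * g q ≤ g 0 * g (p+q) := by
  have ratio : ∀ n k, g (n+1) * g (n+k) ≤ g n * g (n+k+1) := by
    intro n k
    induction k with
    | zero => simp [mul_comm]
    | succ k ih =>
      have h2 := hc (n+k)
      have h3 := hg (n+k)
      have h4 := hg (n+k+1)
      have h5 := hg (n+1)
      have h6 := hg n
      show g (n+1) * g (n+k+1) ≤ g n * g (n+k+2)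
      nlinarith [mul_le_mul_of_nonneg_right ih h4.le,
        mul_le_mul_of_nonneg_left h2 h6.le]
  intro p q
  induction p with
  | zero => simp
  | succ p ih =>
    have h1 := mul_le_mul_of_nonneg_left ih (hg (p+1)).le
    have h2 := mul_le_mul_of_nonneg_left (ratio p q) (hg 0).le
    have h3 := hg p
    have hgoal : g p * (g (p+1) * g q) ≤ g p * (g 0 * g (p+1+q)) := by
      have : p + 1 + q = p + q + 1 := by ring
      rw [this]
      nlinarith [hg (p+q), hg q]
    exact le_of_mul_le_mul_left hgoal h3

private lemma superadd (d : ℕ) (M : ℝ → (Fin d → ℕ) → ℝ) (hM : IsWSS d M)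
    (hiso : IsoDecomposable d M) (l : ℝ) (hl : 0 < l) (β γ : Fin d → ℕ) :
    M l β * M l γ ≤ M l 0 * M l (β + γ) := by
  obtain ⟨k, b, m, hmpos, hrep⟩ := hiso
  have hsingle : ∀ (i : Fin d) (t : ℕ) (j : Fin k),
      (∑ i' ∈ Finset.univ.filter fun i' => b i' = j, Pi.single i t i') =
        if b i = j then t else 0 := by
    intro i t j
    simp only [Pi.single_apply]
    rw [Finset.sum_ite_eq' (Finset.univ.filter fun i' => b i' = j) i (fun _ => t)]
    simp
  have hMsingle : ∀ (i : Fin d) (t : ℕ),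
      M l (Pi.single i t) =
        m l (b i) t * ∏ j ∈ Finset.univ.erase (b i), m l j 0 := by
    intro i t
    rw [hrep l hl]
    rw [← Finset.mul_prod_erase Finset.univ _ (Finset.mem_univ (b i))]
    congr 1
    · rw [hsingle]; simp
    · apply Finset.prod_congr rfl
      intro j hj
      rw [hsingle]
      simp [Finset.ne_of_mem_erase hj, (Finset.ne_of_mem_erase hj).symm]
  have key : ∀ j : Fin k,
      m l j (∑ i ∈ Finset.univ.filter fun i => b i = j, β i) *
        m l j (∑ i ∈ Finset.univ.filter fun i => b i = j, γ i) ≤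
      m l j 0 * m l j ((∑ i ∈ Finset.univ.filter fun i => b i = j, β i) +
        (∑ i ∈ Finset.univ.filter fun i => b i = j, γ i)) := by
    intro j
    by_cases hj : ∃ i, b i = j
    · obtain ⟨i, hi⟩ := hj
      apply onedim (m l j) (hmpos l hl j)
      intro t
      have hconv := hM.logconvex l hl (Pi.single i t) i
      have e1 : Pi.single i t + Pi.single i 1 = (Pi.single i (t+1) : Fin d → ℕ) := by
        funext i'
        simp only [Pi.add_apply, Pi.single_apply]
        split <;> simp
      have e2 : Pi.single i t + Pi.single i 2 = (Pi.single i (t+2) : Fin d → ℕ) := by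
        funext i'
        simp only [Pi.add_apply, Pi.single_apply]
        split <;> simp
      rw [e1, e2, hMsingle, hMsingle, hMsingle] at hconv
      set P := ∏ j' ∈ Finset.univ.erase (b i), m l j' 0 with hP
      have hPpos : 0 < P := Finset.prod_pos fun j' _ => hmpos l hl j' 0
      rw [hi] at hconv
      nlinarith [hmpos l hl j (t+1), hmpos l hl j t, hmpos l hl j (t+2),
        sq_nonneg P, mul_pos hPpos hPpos]
    · push_neg at hj
      have hβ : (∑ i ∈ Finset.univ.filter fun i => b i = j, β i) = 0 := by
        rw [Finset.sum_eq_zero]; intro i hi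
        simp only [Finset.mem_filter] at hi; exact absurd hi.2 (hj i)
      have hγ : (∑ i ∈ Finset.univ.filter fun i => b i = j, γ i) = 0 := by
        rw [Finset.sum_eq_zero]; intro i hi
        simp only [Finset.mem_filter] at hi; exact absurd hi.2 (hj i)
      rw [hβ, hγ]
  rw [hrep l hl β, hrep l hl γ, hrep l hl 0, hrep l hl (β + γ),
    ← Finset.prod_mul_distrib, ← Finset.prod_mul_distrib]
  apply Finset.prod_le_prod
  · intro j _; exact (mul_pos (hmpos l hl j _) (hmpos l hl j _)).le
  · intro j _
    simp only [Pi.add_apply, Pi.zero_apply, Finset.sum_add_distrib,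
      Finset.sum_const_zero]
    exact key j

private lemma term_bdd (d : ℕ) (M : ℝ → (Fin d → ℕ) → ℝ) (hM : IsWSS d M)
    (l : ℝ) (hl : 0 < l) (x : EuclideanSpace ℝ (Fin d)) :
    ∃ B : ℝ, 1 ≤ B ∧ ∀ α : Fin d → ℕ,
      (∏ i, |x i| ^ α i) * M l 0 / M l α ≤ B := by
  set R : ℝ := 1 + ∑ i, |x i| with hR
  have hRpos : 0 < R := by positivity
  have hR1 : 1 ≤ R := by
    have : 0 ≤ ∑ i, |x i| := Finset.sum_nonneg fun i _ => abs_nonneg _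
    linarith
  have hxR : ∀ i, |x i| ≤ R := by
    intro i
    have h1 : |x i| ≤ ∑ i, |x i| :=
      Finset.single_le_sum (fun i _ => abs_nonneg (x i)) (Finset.mem_univ i)
    linarith
  obtain ⟨N, hN⟩ := hM.growth l hl R hRpos
  set S : Finset (Fin d → ℕ) := Fintype.piFinset fun _ => Finset.range (N+1) with hS
  have hSne : S.Nonempty := ⟨fun _ => 0, by simp [hS, Fintype.mem_piFinset]⟩
  set c : ℝ := S.inf' hSne (M l) with hc
  have hcpos : 0 < c := by
    rw [hc, Finset.lt_inf'_iff]
    exact fun α _ => hM.pos l hl α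
  refine ⟨max 1 (max (M l 0) (R ^ N * M l 0 / c)), le_max_left _ _, fun α => ?_⟩
  have hMα := hM.pos l hl α
  have hM0 := hM.pos l hl 0
  have hprod : (∏ i, |x i| ^ α i) ≤ R ^ (∑ i, α i) := by
    rw [← Finset.prod_pow_eq_pow_sum]
    exact Finset.prod_le_prod (fun i _ => pow_nonneg (abs_nonneg _) _)
      (fun i _ => pow_le_pow_left₀ (abs_nonneg _) (hxR i) _)
  rcases le_or_gt N (∑ i, α i) with h | h
  · -- large |α| : term ≤ M l 0
    have hMge := hN α h
    have : (∏ i, |x i| ^ α i) * M l 0 / M l α ≤ M l 0 := by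
      rw [div_le_iff₀ hMα]
      have h1 : (∏ i, |x i| ^ α i) * M l 0 ≤ R ^ (∑ i, α i) * M l 0 :=
        mul_le_mul_of_nonneg_right hprod hM0.le
      have h2 : R ^ (∑ i, α i) * M l 0 ≤ M l α * M l 0 :=
        mul_le_mul_of_nonneg_right hMge hM0.le
      calc (∏ i, |x i| ^ α i) * M l 0 ≤ M l α * M l 0 := le_trans h1 h2
        _ = M l 0 * M l α := mul_comm _ _
    exact this.trans (le_max_of_le_right (le_max_left _ _))
  · -- small |α|
    have hαS : α ∈ S := by
      simp only [hS, Fintype.mem_piFinset, Finset.mem_range]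
      intro i
      have : α i ≤ ∑ i, α i :=
        Finset.single_le_sum (fun i _ => Nat.zero_le _) (Finset.mem_univ i)
      omega
    have hcα : c ≤ M l α := Finset.inf'_le _ hαS
    have hRN : R ^ (∑ i, α i) ≤ R ^ N := pow_le_pow_right₀ hR1 h.le
    have : (∏ i, |x i| ^ α i) * M l 0 / M l α ≤ R ^ N * M l 0 / c := by
      apply div_le_div₀ (by positivity) ?_ hcpos hcα
      exact mul_le_mul (hprod.trans hRN) le_rfl hM0.le (by positivity)
    exact this.trans (le_max_of_le_right (le_max_right _ _))

private lemma assoc_bdd (d : ℕ) (M : ℝ → (Fin d → ℕ) → ℝ) (hM : IsWSS d M)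
    (l : ℝ) (hl : 0 < l) (x : EuclideanSpace ℝ (Fin d)) :
    BddAbove (Set.range fun α : Fin d → ℕ =>
      Real.log ((∏ i, |x i| ^ α i) * M l 0 / M l α)) := by
  obtain ⟨B, hB1, hB⟩ := term_bdd d M hM l hl x
  refine ⟨Real.log B, ?_⟩
  rintro _ ⟨α, rfl⟩
  have hnn : 0 ≤ (∏ i, |x i| ^ α i) * M l 0 / M l α := by
    have := hM.pos l hl 0
    have := hM.pos l hl α
    positivity
  simp only
  rcases eq_or_lt_of_le hnn with h | h
  · rw [← h, Real.log_zero]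
    exact Real.log_nonneg hB1
  · exact Real.log_le_log h (hB α)

private lemma assoc_nonneg (d : ℕ) (M : ℝ → (Fin d → ℕ) → ℝ) (hM : IsWSS d M)
    (l : ℝ) (hl : 0 < l) (x : EuclideanSpace ℝ (Fin d)) :
    0 ≤ assocFun d (M l) x := by
  have h := le_ciSup (assoc_bdd d M hM l hl x) (0 : Fin d → ℕ)
  have h0 : Real.log ((∏ i, |x i| ^ (0 : Fin d → ℕ) i) * M l 0 / M l 0) = 0 := by
    have := (hM.pos l hl 0).ne'
    simp [this, Real.log_one, div_self, mul_comm]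
  rw [h0] at h
  exact h

private lemma assoc_term_le (d : ℕ) (M : ℝ → (Fin d → ℕ) → ℝ) (hM : IsWSS d M)
    (l : ℝ) (hl : 0 < l) (x : EuclideanSpace ℝ (Fin d)) (α : Fin d → ℕ) :
    Real.log ((∏ i, |x i| ^ α i) * M l 0 / M l α) ≤ assocFun d (M l) x :=
  le_ciSup (assoc_bdd d M hM l hl x) α

/-- If `𝔐` is an isotropically decomposable weight sequence system satisfying (L), then the
weight function system `(e^{ω_{M^λ}})_λ` satisfies (M):
`ω_{M^λ}(x+y) ≤ ω_{M^μ}(x) + ω_{M^ν}(y) + log C`. -/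
theorem stmt2 (d : ℕ) (M : ℝ → (Fin d → ℕ) → ℝ)
    (hM : IsWSS d M) (hL : WSS_L_B d M) (hiso : IsoDecomposable d M) :
    ∀ l, 0 < l → ∃ m, 0 < m ∧ ∃ n, 0 < n ∧ ∃ C, 0 < C ∧
      ∀ x y : EuclideanSpace ℝ (Fin d),
        assocFun d (M l) (x + y) ≤
          assocFun d (M m) x + assocFun d (M n) y + Real.log C := by
  intro l hl
  obtain ⟨m, hm, C, hC, hCle⟩ := hL 2 two_pos l hl
  have hMm0 := hM.pos m hm 0
  have hMl0 := hM.pos l hl 0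
  set C'' : ℝ := max 1 (C * M l 0 / M m 0) with hC''def
  have hC''1 : (1:ℝ) ≤ C'' := le_max_left _ _
  refine ⟨m, hm, m, hm, C'', zero_lt_one.trans_le hC''1, fun x y => ?_⟩
  have hWx := assoc_nonneg d M hM m hm x
  have hWy := assoc_nonneg d M hM m hm y
  set Wx := assocFun d (M m) x with hWxdef
  set Wy := assocFun d (M m) y with hWydef
  refine ciSup_le fun α => ?_
  set β : Fin d → ℕ := fun i => if |y i| ≤ |x i| then α i else 0 with hβdef
  set γ : Fin d → ℕ := fun i => if |y i| ≤ |x i| then 0 else α i with hγdef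
  have hβγ : β + γ = α := by
    funext i
    simp only [Pi.add_apply, hβdef, hγdef]
    split <;> simp
  set Ax : ℝ := ∏ i, |x i| ^ β i with hAxdef
  set Ay : ℝ := ∏ i, |y i| ^ γ i with hAydef
  have hAx : 0 ≤ Ax := Finset.prod_nonneg fun i _ => pow_nonneg (abs_nonneg _) _
  have hAy : 0 ≤ Ay := Finset.prod_nonneg fun i _ => pow_nonneg (abs_nonneg _) _
  set s : ℕ := ∑ i, α i with hsdef
  have happ : ∀ i, (x + y) i = x i + y i := fun i => rfl
  have hprod : (∏ i, |(x + y) i| ^ α i) ≤ 2 ^ s * (Ax * Ay) := by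
    have hpt : ∀ i ∈ Finset.univ, |(x + y) i| ^ α i ≤
        2 ^ α i * (|x i| ^ β i * |y i| ^ γ i) := by
      intro i _
      rw [happ i]
      by_cases h : |y i| ≤ |x i|
      · have hle : |x i + y i| ≤ 2 * |x i| := (abs_add_le _ _).trans (by linarith)
        calc |x i + y i| ^ α i ≤ (2 * |x i|) ^ α i :=
              pow_le_pow_left₀ (abs_nonneg _) hle _
          _ = 2 ^ α i * (|x i| ^ β i * |y i| ^ γ i) := by
              simp [hβdef, hγdef, h, mul_pow]
      · have hle : |x i + y i| ≤ 2 * |y i| := (abs_add_le _ _).trans (by linarith)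
        calc |x i + y i| ^ α i ≤ (2 * |y i|) ^ α i :=
              pow_le_pow_left₀ (abs_nonneg _) hle _
          _ = 2 ^ α i * (|x i| ^ β i * |y i| ^ γ i) := by
              simp [hβdef, hγdef, h, mul_pow]
    calc (∏ i, |(x + y) i| ^ α i) ≤
        ∏ i, 2 ^ α i * (|x i| ^ β i * |y i| ^ γ i) :=
          Finset.prod_le_prod (fun i _ => pow_nonneg (abs_nonneg _) _) hpt
      _ = 2 ^ s * (Ax * Ay) := by
          rw [Finset.prod_mul_distrib, Finset.prod_mul_distrib,
            Finset.prod_pow_eq_pow_sum]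
  have hMmβ := hM.pos m hm β
  have hMmγ := hM.pos m hm γ
  have hMlα := hM.pos l hl α
  have hMmα := hM.pos m hm α
  set Ex : ℝ := Real.exp Wx with hExdef
  set Ey : ℝ := Real.exp Wy with hEydef
  have hEx : Ax * M m 0 / M m β ≤ Ex := by
    have hterm := assoc_term_le d M hM m hm x β
    rcases eq_or_lt_of_le (show (0:ℝ) ≤ Ax * M m 0 / M m β by positivity) with h | h
    · rw [← h]; exact (Real.exp_pos _).le
    · rw [← Real.exp_log h]
      exact Real.exp_le_exp.mpr hterm
  have hEy : Ay * M m 0 / M m γ ≤ Ey := by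
    have hterm := assoc_term_le d M hM m hm y γ
    rcases eq_or_lt_of_le (show (0:ℝ) ≤ Ay * M m 0 / M m γ by positivity) with h | h
    · rw [← h]; exact (Real.exp_pos _).le
    · rw [← Real.exp_log h]
      exact Real.exp_le_exp.mpr hterm
  have h1 : Ax * M m 0 ≤ Ex * M m β := (div_le_iff₀ hMmβ).mp hEx
  have h2 : Ay * M m 0 ≤ Ey * M m γ := (div_le_iff₀ hMmγ).mp hEy
  have hsuper : M m β * M m γ ≤ M m 0 * M m α := by
    have := superadd d M hM hiso m hm β γ
    rwa [hβγ] at this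
  have hL2 : (2:ℝ) ^ s * M m α ≤ C * M l α := hCle α
  have hCC : C * M l 0 ≤ C'' * M m 0 :=
    (div_le_iff₀ hMm0).mp (le_max_right _ _)
  have hExpos := Real.exp_pos Wx
  have hEypos := Real.exp_pos Wy
  have H : ((2:ℝ) ^ s * (Ax * Ay)) * M l 0 * (M m 0 * M m 0) ≤
      (Ex * Ey * C'' * M l α) * (M m 0 * M m 0) := by
    calc ((2:ℝ) ^ s * (Ax * Ay)) * M l 0 * (M m 0 * M m 0)
        = ((Ax * M m 0) * (Ay * M m 0)) * (2 ^ s * M l 0) := by ring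
      _ ≤ ((Ex * M m β) * (Ey * M m γ)) * (2 ^ s * M l 0) := by
          apply mul_le_mul_of_nonneg_right _ (by positivity)
          exact mul_le_mul h1 h2 (by positivity) (by positivity)
      _ = (Ex * Ey) * ((M m β * M m γ) * (2 ^ s * M l 0)) := by ring
      _ ≤ (Ex * Ey) * ((M m 0 * M m α) * (2 ^ s * M l 0)) := by
          apply mul_le_mul_of_nonneg_left _ (by positivity)
          exact mul_le_mul_of_nonneg_right hsuper (by positivity)
      _ = (Ex * Ey * M m 0 * M l 0) * (2 ^ s * M m α) := by ring
      _ ≤ (Ex * Ey * M m 0 * M l 0) * (C * M l α) := by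
          apply mul_le_mul_of_nonneg_left hL2 (by positivity)
      _ = (Ex * Ey * M l α * M m 0) * (C * M l 0) := by ring
      _ ≤ (Ex * Ey * M l α * M m 0) * (C'' * M m 0) := by
          apply mul_le_mul_of_nonneg_left hCC (by positivity)
      _ = (Ex * Ey * C'' * M l α) * (M m 0 * M m 0) := by ring
  have H2 : ((2:ℝ) ^ s * (Ax * Ay)) * M l 0 ≤ Ex * Ey * C'' * M l α :=
    le_of_mul_le_mul_right H (mul_pos hMm0 hMm0)
  have key : (∏ i, |(x + y) i| ^ α i) * M l 0 / M l α ≤ Ex * Ey * C'' := by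
    rw [div_le_iff₀ hMlα]
    calc (∏ i, |(x + y) i| ^ α i) * M l 0
        ≤ (2 ^ s * (Ax * Ay)) * M l 0 := mul_le_mul_of_nonneg_right hprod hMl0.le
      _ ≤ Ex * Ey * C'' * M l α := H2
  have hT0 : 0 ≤ (∏ i, |(x + y) i| ^ α i) * M l 0 / M l α := by positivity
  rcases eq_or_lt_of_le hT0 with h | h
  · rw [← h, Real.log_zero]
    have := Real.log_nonneg hC''1
    linarith
  · calc Real.log ((∏ i, |(x + y) i| ^ α i) * M l 0 / M l α)
        ≤ Real.log (Ex * Ey * C'') := Real.log_le_log h key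
      _ = Wx + Wy + Real.log C'' := by
          rw [Real.log_mul (by positivity) (by positivity),
            Real.log_mul hExpos.ne' hEypos.ne']
          simp only [hExdef, hEydef, Real.log_exp]
end

section
/- Let M = (M_α)_{α∈ℕ^d} be a family of positive reals, let w : ℝ^d → (0,∞) be continuous, and let q ∈ [1,∞]. Suppose (φ_n)_{n∈ℕ} and φ are smooth functions ℝ^d → ℂ such that for every multi-index α and every x ∈ ℝ^d, ∂^α φ_n(x) → ∂^α φ(x) as n → ∞, and such that ‖φ_n‖_{𝒮^M_{w,q}} ≤ 1 for all n. Then ‖φ‖_{𝒮^M_{w,q}} ≤ 1. -/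
open MeasureTheory Filter ENNReal Asymptotics

/-- The closed unit ball of `𝒮^M_{w,q}` is closed under pointwise convergence of all
derivatives. -/
theorem stmt6 (d : ℕ) (M : (Fin d → ℕ) → ℝ) (hMpos : ∀ α, 0 < M α)
    (w : EuclideanSpace ℝ (Fin d) → ℝ) (hwc : Continuous w) (hwpos : ∀ x, 0 < w x)
    (q : ℝ≥0∞) (hq : 1 ≤ q)
    (φn : ℕ → EuclideanSpace ℝ (Fin d) → ℂ) (φ : EuclideanSpace ℝ (Fin d) → ℂ)
    (hφn : ∀ n, ContDiff ℝ (⊤ : ℕ∞) (φn n)) (hφ : ContDiff ℝ (⊤ : ℕ∞) φ)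
    (hconv : ∀ (α : Fin d → ℕ) (x : EuclideanSpace ℝ (Fin d)),
      Tendsto (fun n => pdMulti d α (φn n) x) atTop (nhds (pdMulti d α φ x)))
    (hbd : ∀ n, gsNorm d M w q (φn n) ≤ 1) :
    gsNorm d M w q φ ≤ 1 := by
  refine iSup_le fun α => ?_
  have hcd : ∀ (f : EuclideanSpace ℝ (Fin d) → ℂ), ContDiff ℝ (⊤ : ℕ∞) f →
      ContDiff ℝ (⊤ : ℕ∞) (pdMulti d α f) := by
    have hpd : ∀ (i : Fin d) (f : EuclideanSpace ℝ (Fin d) → ℂ), ContDiff ℝ (⊤ : ℕ∞) f →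
        ContDiff ℝ (⊤ : ℕ∞) (pd d i f) := fun i f hf =>
      (hf.fderiv_right (m := (⊤ : ℕ∞)) (by exact_mod_cast le_top)).clm_apply contDiff_const
    have hpow : ∀ (i : Fin d) (n : ℕ) (f : EuclideanSpace ℝ (Fin d) → ℂ),
        ContDiff ℝ (⊤ : ℕ∞) f → ContDiff ℝ (⊤ : ℕ∞) (pdPow d i n f) := by
      intro i n
      induction n with
      | zero => exact fun f hf => hf
      | succ n ih => exact fun f hf => hpd i _ (ih f hf)
    intro f hf
    unfold pdMulti
    induction List.finRange d generalizing f with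
    | nil => exact hf
    | cons i L ih => exact hpow i _ _ (ih f hf)
  set g : ℕ → EuclideanSpace ℝ (Fin d) → ℝ := fun n x => ‖pdMulti d α (φn n) x‖ * w x with hg
  have hmeas : ∀ n, AEStronglyMeasurable (g n) volume := fun n =>
    (((hcd _ (hφn n)).continuous.norm).mul hwc).aestronglyMeasurable
  have hlim : ∀ x, Tendsto (fun n => g n x) atTop
      (nhds (‖pdMulti d α φ x‖ * w x)) := fun x =>
    ((hconv α x).norm).mul_const _
  have key := MeasureTheory.Lp.eLpNorm_lim_le_liminf_eLpNorm (p := q) (μ := volume) hmeas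
    (fun x => ‖pdMulti d α φ x‖ * w x) (Filter.Eventually.of_forall hlim)
  have hM0 : (ENNReal.ofReal (M α)) ≠ 0 := by
    simp [ENNReal.ofReal_eq_zero, not_le, hMpos α]
  have hbound : ∀ n, eLpNorm (g n) q volume ≤ ENNReal.ofReal (M α) := by
    intro n
    have h1 : eLpNorm (g n) q volume / ENNReal.ofReal (M α) ≤ 1 :=
      le_trans (le_iSup (fun β => eLpNorm (fun x => ‖pdMulti d β (φn n) x‖ * w x) q volume /
        ENNReal.ofReal (M β)) α) (hbd n)
    have := (ENNReal.div_le_iff hM0 ENNReal.ofReal_ne_top).mp h1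
    simpa using this
  have hfin : eLpNorm (fun x => ‖pdMulti d α φ x‖ * w x) q volume ≤ ENNReal.ofReal (M α) :=
    key.trans ((Filter.liminf_le_liminf (Filter.Eventually.of_forall hbound)).trans_eq
      (Filter.liminf_const _))
  exact ENNReal.div_le_of_le_mul (by simpa using hfin)
end

section
/- Let 𝔐 be a weight sequence system on ℝ^d satisfying (L) and (𝔐.2)', and let 𝒲 be a weight function system on ℝ^d satisfying (wM) and (N). Then for all q, r ∈ [1,∞] the sets 𝒮^{(𝔐)}_{(𝒲),q} and 𝒮^{(𝔐)}_{(𝒲),r} coincide; moreover, for every λ > 0 there exist μ > 0 and C > 0 such that ‖φ‖_{𝒮^{M^λ}_{w^λ,r}} ≤ C ‖φ‖_{𝒮^{M^μ}_{w^μ,q}} for every smooth φ : ℝ^d → ℂ with finite right-hand side. -/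
open MeasureTheory Filter ENNReal Asymptotics

/-!
Conditions (wM) and (N) make the ratios `w^λ/w^μ` (for suitable `μ ≤ λ`) bounded and integrable,
hence in every `L^p`. By Hölder's inequality the `L^r`-seminorm at level `λ` is then dominated by
the `L^∞`-seminorm at a lower level, and the `L^1`-seminorm by the `L^q`-seminorm at a lower level.
The missing link, `L^∞` by `L^1`, is a Sobolev inequality on unit cubes,
`|f(x)| ≤ ∑_{T ⊆ {1,…,d}} ∫_{x+[0,1]^d} |∂^{1_T} f|`, obtained from the fundamental theorem of
calculus in one coordinate at a time. Across the cube (wM) moves the weight, and (𝔐.2)' together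
with (L) absorb the at most `d` extra derivatives.
-/

open scoped ContDiff NNReal

section PartialDerivatives

variable {d : ℕ} {f : EuclideanSpace ℝ (Fin d) → ℂ}

theorem contDiff_pd (hf : ContDiff ℝ ∞ f) (i : Fin d) : ContDiff ℝ ∞ (pd d i f) :=
  (hf.fderiv_right (by simp)).clm_apply contDiff_const

theorem contDiff_pdPow (hf : ContDiff ℝ ∞ f) (i : Fin d) (n : ℕ) :
    ContDiff ℝ ∞ (pdPow d i n f) := by
  induction n with
  | zero => exact hf
  | succ n ih => exact contDiff_pd ih i

theorem contDiff_foldr_pdPow (hf : ContDiff ℝ ∞ f) (α : Fin d → ℕ) (L : List (Fin d)) :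
    ContDiff ℝ ∞ (L.foldr (fun i g => pdPow d i (α i) g) f) := by
  induction L with
  | nil => exact hf
  | cons j L ih => exact contDiff_pdPow ih j (α j)

theorem contDiff_pdMulti (hf : ContDiff ℝ ∞ f) (α : Fin d → ℕ) :
    ContDiff ℝ ∞ (pdMulti d α f) :=
  contDiff_foldr_pdPow hf α _

theorem pd_comm (hf : ContDiff ℝ ∞ f) (i j : Fin d) :
    pd d i (pd d j f) = pd d j (pd d i f) := by
  have hf' : ContDiff ℝ ∞ (fderiv ℝ f) := hf.fderiv_right (by simp)
  have hd2 : ∀ x, DifferentiableAt ℝ (fderiv ℝ f) x := hf'.differentiable (by simp)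
  have hpd : ∀ k x, fderiv ℝ (pd d k f) x
      = (fderiv ℝ (fderiv ℝ f) x).flip (EuclideanSpace.single k 1) := by
    intro k x
    rw [show pd d k f = fun y => fderiv ℝ f y (EuclideanSpace.single k 1) from rfl,
      fderiv_clm_apply (hd2 x) (differentiableAt_const _)]
    ext v
    simp
  funext x
  simp only [pd, hpd]
  exact (second_derivative_symmetric (fun y => (hf.differentiable (by simp) y).hasFDerivAt)
    (hd2 x).hasFDerivAt _ _).symm

theorem pd_pdPow_comm (hf : ContDiff ℝ ∞ f) (i j : Fin d) (n : ℕ) :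
    pd d i (pdPow d j n f) = pdPow d j n (pd d i f) := by
  induction n with
  | zero => rfl
  | succ n ih =>
    change pd d i (pd d j (pdPow d j n f)) = pd d j (pdPow d j n (pd d i f))
    rw [pd_comm (contDiff_pdPow hf j n), ih]

theorem pdPow_pdPow_comm (hf : ContDiff ℝ ∞ f) (i j : Fin d) (m n : ℕ) :
    pdPow d i m (pdPow d j n f) = pdPow d j n (pdPow d i m f) := by
  induction m with
  | zero => rfl
  | succ m ih =>
    change pd d i (pdPow d i m (pdPow d j n f)) = _
    rw [ih, pd_pdPow_comm (contDiff_pdPow hf i m)]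
    rfl

theorem pdPow_add (i : Fin d) (m n : ℕ) (f : EuclideanSpace ℝ (Fin d) → ℂ) :
    pdPow d i (m + n) f = pdPow d i m (pdPow d i n f) := by
  induction m with
  | zero => simp [pdPow]
  | succ m ih => rw [Nat.succ_add]; exact congrArg (pd d i) ih

theorem foldr_pdPow_comm (hf : ContDiff ℝ ∞ f) (α : Fin d → ℕ) (L : List (Fin d))
    (j : Fin d) (n : ℕ) :
    L.foldr (fun i g => pdPow d i (α i) g) (pdPow d j n f)
      = pdPow d j n (L.foldr (fun i g => pdPow d i (α i) g) f) := by
  induction L with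
  | nil => rfl
  | cons i L ih =>
    change pdPow d i (α i) (L.foldr _ _) = _
    rw [ih, pdPow_pdPow_comm (contDiff_foldr_pdPow hf α L)]
    rfl

theorem pdMulti_add (hf : ContDiff ℝ ∞ f) (α β : Fin d → ℕ) :
    pdMulti d (α + β) f = pdMulti d α (pdMulti d β f) := by
  suffices ∀ L : List (Fin d), L.foldr (fun i g => pdPow d i ((α + β) i) g) f
      = L.foldr (fun i g => pdPow d i (α i) g) (L.foldr (fun i g => pdPow d i (β i) g) f) from
    this _
  intro L
  induction L with
  | nil => rfl
  | cons j L ih =>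
    change pdPow d j (α j + β j) (L.foldr _ _) = pdPow d j (α j) (L.foldr _ (pdPow d j (β j) _))
    rw [ih, pdPow_add, foldr_pdPow_comm (contDiff_foldr_pdPow hf β L),
      pdPow_pdPow_comm (contDiff_foldr_pdPow (contDiff_foldr_pdPow hf β L) α L)]

theorem pdMulti_zero (f : EuclideanSpace ℝ (Fin d) → ℂ) : pdMulti d 0 f = f := by
  unfold pdMulti
  induction List.finRange d with
  | nil => rfl
  | cons j L ih => exact ih

theorem pdMulti_single (i : Fin d) (f : EuclideanSpace ℝ (Fin d) → ℂ) :
    pdMulti d (Pi.single i 1) f = pd d i f := by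
  suffices ∀ L : List (Fin d), L.Nodup →
      L.foldr (fun j g => pdPow d j ((Pi.single i 1 : Fin d → ℕ) j) g) f
        = if i ∈ L then pd d i f else f from
    by simpa [pdMulti] using this _ (List.nodup_finRange d)
  intro L hL
  induction L with
  | nil => simp
  | cons j L ih =>
    obtain ⟨hjL, hL⟩ := List.nodup_cons.mp hL
    change pdPow d j ((Pi.single i 1 : Fin d → ℕ) j) (L.foldr _ f) = _
    rw [ih hL]
    by_cases hji : j = i
    · subst hji
      simp [hjL, pdPow]
    · simp [hji, Ne.symm hji, pdPow]

theorem pdMulti_pd (hf : ContDiff ℝ ∞ f) (α : Fin d → ℕ) (i : Fin d) :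
    pdMulti d α (pd d i f) = pdMulti d (α + Pi.single i 1) f := by
  rw [pdMulti_add hf, pdMulti_single]

end PartialDerivatives

section CubeEstimate

open Set

variable {d : ℕ} {f : EuclideanSpace ℝ (Fin d) → ℂ}

theorem enorm_le_setLIntegral_Icc_enorm_add_enorm_deriv {E : Type*} [NormedAddCommGroup E]
    [NormedSpace ℝ E] {g : ℝ → E} (hg : ContDiff ℝ 1 g) {a : ℝ} (ha : a ∈ Icc (0 : ℝ) 1) :
    ‖g a‖ₑ ≤ ∫⁻ t in Icc 0 1, (‖g t‖ₑ + ‖deriv g t‖ₑ) := by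
  set A := ∫⁻ t in Icc (0 : ℝ) 1, ‖deriv g t‖ₑ
  have hdiff : ∀ t ∈ Icc (0 : ℝ) 1, ‖g a - g t‖ₑ ≤ A := by
    intro t ht
    rcases le_total t a with hta | hat
    · refine (enorm_sub_le_lintegral_deriv_of_contDiffOn_Icc hg.contDiffOn hta).trans ?_
      exact lintegral_mono_set (Icc_subset_Icc ht.1 ha.2)
    · rw [enorm_sub_rev]
      refine (enorm_sub_le_lintegral_deriv_of_contDiffOn_Icc hg.contDiffOn hat).trans ?_
      exact lintegral_mono_set (Icc_subset_Icc ha.1 ht.2)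
  calc ‖g a‖ₑ = ∫⁻ _ in Icc (0 : ℝ) 1, ‖g a‖ₑ := by simp
    _ ≤ ∫⁻ t in Icc 0 1, (‖g t‖ₑ + A) := by
      refine setLIntegral_mono' measurableSet_Icc fun t ht => ?_
      calc ‖g a‖ₑ ≤ ‖g t‖ₑ + ‖g a - g t‖ₑ := by
            simpa using enorm_add_le (g t) (g a - g t)
        _ ≤ ‖g t‖ₑ + A := by gcongr; exact hdiff t ht
    _ = ∫⁻ t in Icc 0 1, (‖g t‖ₑ + ‖deriv g t‖ₑ) := by
      rw [lintegral_add_right _ measurable_const,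
        lintegral_add_right _ (hg.continuous_deriv le_rfl).enorm.measurable]
      simp [A]

theorem hasDerivAt_comp_toLp_update (hf : Differentiable ℝ f) (x : EuclideanSpace ℝ (Fin d))
    (y : Fin d → ℝ) (i : Fin d) (t : ℝ) :
    HasDerivAt (fun t => f (x + WithLp.toLp 2 (Function.update y i t)))
      (pd d i f (x + WithLp.toLp 2 (Function.update y i t))) t := by
  have hline : HasDerivAt (fun t => x + WithLp.toLp 2 (Function.update y i t))
      (EuclideanSpace.single i 1) t :=
    ((EuclideanSpace.equiv (Fin d) ℝ).symm.hasFDerivAt.comp_hasDerivAt t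
      (hasDerivAt_update y i t)).const_add x
  exact (hf _).hasFDerivAt.comp_hasDerivAt t hline

def indicatorMultiIndex (T : Finset (Fin d)) : Fin d → ℕ := fun j => if j ∈ T then 1 else 0

theorem indicatorMultiIndex_empty : indicatorMultiIndex (∅ : Finset (Fin d)) = 0 := by
  funext j
  simp [indicatorMultiIndex]

theorem indicatorMultiIndex_insert {T : Finset (Fin d)} {i : Fin d} (hi : i ∉ T) :
    indicatorMultiIndex (insert i T) = indicatorMultiIndex T + Pi.single i 1 := by
  funext j
  by_cases hji : j = i
  · subst hji
    simp [indicatorMultiIndex, hi]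
  · simp [indicatorMultiIndex, hji]

theorem sum_indicatorMultiIndex_le (T : Finset (Fin d)) : ∑ j, indicatorMultiIndex T j ≤ d := by
  calc ∑ j, indicatorMultiIndex T j ≤ ∑ _j : Fin d, 1 :=
        Finset.sum_le_sum fun j _ => by unfold indicatorMultiIndex; split_ifs <;> omega
    _ = d := by simp

theorem measurable_enorm_pdMulti_comp_toLp (hf : ContDiff ℝ ∞ f) (α : Fin d → ℕ)
    (x : EuclideanSpace ℝ (Fin d)) :
    Measurable fun u : Fin d → ℝ => ‖pdMulti d α f (x + WithLp.toLp 2 u)‖ₑ :=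
  ((contDiff_pdMulti hf α).continuous.comp
    (continuous_const.add (PiLp.continuous_toLp 2 _))).enorm.measurable

/-- The base point `y` stays in the unit cube, so that the one-dimensional estimate applies to
each coordinate of `s` in turn; every application adds one derivative in a new direction. -/
theorem enorm_le_sum_lmarginal_pdMulti (hf : ContDiff ℝ ∞ f) (x : EuclideanSpace ℝ (Fin d))
    (s : Finset (Fin d)) {y : Fin d → ℝ} (hy : ∀ i, y i ∈ Icc (0 : ℝ) 1) :
    ‖f (x + WithLp.toLp 2 y)‖ₑ ≤ ∑ T ∈ s.powerset,
      (∫⋯∫⁻_s, fun u => ‖pdMulti d (indicatorMultiIndex T) f (x + WithLp.toLp 2 u)‖ₑ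
        ∂fun _ => volume.restrict (Icc 0 1)) y := by
  induction s using Finset.induction_on generalizing f y with
  | empty => simp [indicatorMultiIndex_empty, pdMulti_zero]
  | @insert i s hi ih =>
    set L : Finset (Fin d) → (EuclideanSpace ℝ (Fin d) → ℂ) → ℝ → ℝ≥0∞ := fun T g t =>
      (∫⋯∫⁻_s, fun u => ‖pdMulti d (indicatorMultiIndex T) g (x + WithLp.toLp 2 u)‖ₑ
        ∂fun _ => volume.restrict (Icc 0 1)) (Function.update y i t) with hL
    have hLmeas : ∀ T {g : EuclideanSpace ℝ (Fin d) → ℂ}, ContDiff ℝ ∞ g → Measurable (L T g) :=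
      fun T g hg => ((measurable_enorm_pdMulti_comp_toLp hg _ x).lmarginal _).comp
        (measurable_update y)
    have hyt : ∀ t ∈ Icc (0 : ℝ) 1, ∀ j, Function.update y i t j ∈ Icc (0 : ℝ) 1 := by
      intro t ht j
      rcases eq_or_ne j i with rfl | hj
      · simpa using ht
      · simpa [hj] using hy j
    set g : ℝ → ℂ := fun t => f (x + WithLp.toLp 2 (Function.update y i t))
    have hderiv : ∀ t, deriv g t = pd d i f (x + WithLp.toLp 2 (Function.update y i t)) :=
      fun t => (hasDerivAt_comp_toLp_update (hf.differentiable (by simp)) x y i t).deriv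
    have hg : ContDiff ℝ 1 g :=
      (hf.of_le (by simp)).comp (contDiff_const.add ((PiLp.contDiff_toLp).comp
        (contDiff_update 1 y i)))
    rw [Finset.sum_powerset_insert hi]
    calc ‖f (x + WithLp.toLp 2 y)‖ₑ = ‖g (y i)‖ₑ := by simp [g]
      _ ≤ ∫⁻ t in Icc 0 1, (‖g t‖ₑ + ‖deriv g t‖ₑ) :=
        enorm_le_setLIntegral_Icc_enorm_add_enorm_deriv hg (hy i)
      _ ≤ ∫⁻ t in Icc 0 1, ((∑ T ∈ s.powerset, L T f t) + ∑ T ∈ s.powerset, L T (pd d i f) t) := by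
        refine setLIntegral_mono' measurableSet_Icc fun t ht => ?_
        rw [hderiv]
        exact add_le_add (ih hf (hyt t ht)) (ih (contDiff_pd hf i) (hyt t ht))
      _ = (∑ T ∈ s.powerset, ∫⁻ t in Icc 0 1, L T f t)
          + ∑ T ∈ s.powerset, ∫⁻ t in Icc 0 1, L T (pd d i f) t := by
        rw [lintegral_add_left (Finset.measurable_sum _ fun T _ => hLmeas T hf),
          lintegral_finsetSum _ fun T _ => hLmeas T hf,
          lintegral_finsetSum _ fun T _ => hLmeas T (contDiff_pd hf i)]
      _ = (∑ T ∈ s.powerset,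
            (∫⋯∫⁻_insert i s, fun u => ‖pdMulti d (indicatorMultiIndex T) f (x + WithLp.toLp 2 u)‖ₑ
              ∂fun _ => volume.restrict (Icc 0 1)) y)
          + ∑ T ∈ s.powerset,
            (∫⋯∫⁻_insert i s,
              fun u => ‖pdMulti d (indicatorMultiIndex (insert i T)) f (x + WithLp.toLp 2 u)‖ₑ
              ∂fun _ => volume.restrict (Icc 0 1)) y := by
        congr 1 <;> refine Finset.sum_congr rfl fun T hT => ?_
        · rw [lmarginal_insert _ (measurable_enorm_pdMulti_comp_toLp hf _ x) hi]
        · have hiT : i ∉ T := fun h => hi (Finset.mem_powerset.mp hT h)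
          rw [lmarginal_insert _ (measurable_enorm_pdMulti_comp_toLp hf _ x) hi,
            indicatorMultiIndex_insert hiT]
          simp only [hL, pdMulti_pd hf]

theorem enorm_le_sum_setLIntegral_pdMulti (hf : ContDiff ℝ ∞ f) (x : EuclideanSpace ℝ (Fin d)) :
    ‖f x‖ₑ ≤ ∑ T ∈ (Finset.univ : Finset (Fin d)).powerset,
      ∫⁻ u in Icc (0 : Fin d → ℝ) 1,
        ‖pdMulti d (indicatorMultiIndex T) f (x + WithLp.toLp 2 u)‖ₑ := by
  have h := enorm_le_sum_lmarginal_pdMulti hf x Finset.univ (y := 0) (by simp)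
  simp only [lmarginal_univ, WithLp.toLp_zero, add_zero, ← Measure.restrict_pi_pi, ← volume_pi,
    Set.pi_univ_Icc] at h
  exact h

theorem setLIntegral_Icc_comp_add_toLp_le {H : EuclideanSpace ℝ (Fin d) → ℝ≥0∞}
    (hH : Measurable H) (x : EuclideanSpace ℝ (Fin d)) :
    ∫⁻ u in Icc (0 : Fin d → ℝ) 1, H (x + WithLp.toLp 2 u) ≤ ∫⁻ y, H y := by
  refine (setLIntegral_le_lintegral _ _).trans_eq ?_
  exact ((PiLp.volume_preserving_toLp (Fin d)).lintegral_comp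
    (hH.comp (measurable_const_add x) : Measurable fun y => H (x + y))).trans
    (lintegral_add_left_eq_self H x)

theorem ofReal_mul_enorm_le_sum_eLpNorm (hf : ContDiff ℝ ∞ f) {wl wm : EuclideanSpace ℝ (Fin d) → ℝ} (hwm : Continuous wm)
    (hwm0 : ∀ y, 0 ≤ wm y) {C : ℝ}
    (hw : ∀ x, ∀ u ∈ Icc (0 : Fin d → ℝ) 1, wl x ≤ C * wm (x + WithLp.toLp 2 u))
    (x : EuclideanSpace ℝ (Fin d)) :
    ENNReal.ofReal (wl x) * ‖f x‖ₑ
      ≤ ENNReal.ofReal C * ∑ T ∈ (Finset.univ : Finset (Fin d)).powerset,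
        eLpNorm (fun y => ‖pdMulti d (indicatorMultiIndex T) f y‖ * wm y) 1 volume := by
  set G : Finset (Fin d) → EuclideanSpace ℝ (Fin d) → ℝ≥0∞ :=
    fun T y => ‖pdMulti d (indicatorMultiIndex T) f y‖ₑ * ENNReal.ofReal (wm y)
  have hG : ∀ T, Measurable (G T) := fun T =>
    (contDiff_pdMulti hf _).continuous.enorm.measurable.mul
      (ENNReal.measurable_ofReal.comp hwm.measurable)
  have heLpNorm : ∀ T, eLpNorm (fun y => ‖pdMulti d (indicatorMultiIndex T) f y‖ * wm y) 1 volume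
      = ∫⁻ y, G T y := fun T => by
    rw [eLpNorm_one_eq_lintegral_enorm]
    congr with y
    rw [enorm_mul, enorm_norm, Real.enorm_of_nonneg (hwm0 y)]
  calc ENNReal.ofReal (wl x) * ‖f x‖ₑ
      ≤ ENNReal.ofReal (wl x) * ∑ T ∈ (Finset.univ : Finset (Fin d)).powerset,
          ∫⁻ u in Icc (0 : Fin d → ℝ) 1,
            ‖pdMulti d (indicatorMultiIndex T) f (x + WithLp.toLp 2 u)‖ₑ := by
        gcongr
        exact enorm_le_sum_setLIntegral_pdMulti hf x
    _ = ∑ T ∈ (Finset.univ : Finset (Fin d)).powerset, ∫⁻ u in Icc (0 : Fin d → ℝ) 1,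
          ENNReal.ofReal (wl x) * ‖pdMulti d (indicatorMultiIndex T) f (x + WithLp.toLp 2 u)‖ₑ := by
        simp only [Finset.mul_sum, lintegral_const_mul' _ _ ENNReal.ofReal_ne_top]
    _ ≤ ∑ T ∈ (Finset.univ : Finset (Fin d)).powerset, ∫⁻ u in Icc (0 : Fin d → ℝ) 1,
          ENNReal.ofReal C * G T (x + WithLp.toLp 2 u) := by
        refine Finset.sum_le_sum fun T _ => setLIntegral_mono' measurableSet_Icc fun u hu => ?_
        change _ ≤ _ * (_ * _)
        rw [← mul_assoc, mul_right_comm, ← ENNReal.ofReal_mul' (hwm0 _)]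
        gcongr
        exact hw x u hu
    _ ≤ ∑ T ∈ (Finset.univ : Finset (Fin d)).powerset, ENNReal.ofReal C * ∫⁻ y, G T y := by
        gcongr with T
        rw [lintegral_const_mul' _ _ ENNReal.ofReal_ne_top]
        gcongr
        exact setLIntegral_Icc_comp_add_toLp_le (hG T) x
    _ = _ := by simp only [Finset.mul_sum, heLpNorm]

end CubeEstimate

section WeightFunctions

variable {d : ℕ}

theorem memLp_of_integrable_of_bound {α E : Type*} [MeasurableSpace α] {μ : Measure α}
    [NormedAddCommGroup E] {g : α → E} (hint : Integrable g μ) {C : ℝ} (hC : ∀ x, ‖g x‖ ≤ C)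
    {p : ℝ≥0∞} (hp : 1 ≤ p) : MemLp g p μ := by
  rcases eq_or_ne p ⊤ with rfl | hpt
  · exact memLp_top_of_bound hint.aestronglyMeasurable C (ae_of_all _ hC)
  rw [← integrable_norm_rpow_iff hint.aestronglyMeasurable (one_pos.trans_le hp).ne' hpt]
  have hp1 : 1 ≤ p.toReal := by
    simpa using ENNReal.toReal_mono hpt hp
  refine (hint.norm.const_mul (C ^ (p.toReal - 1))).mono'
    (hint.aestronglyMeasurable.norm.aemeasurable.pow_const _).aestronglyMeasurable
    (ae_of_all _ fun x => ?_)
  have hgx := norm_nonneg (g x)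
  -- `‖g‖^p = ‖g‖^(p-1) ‖g‖ ≤ C^(p-1) ‖g‖`
  rw [Real.norm_of_nonneg (by positivity), ← sub_add_cancel p.toReal 1,
    Real.rpow_add' hgx (by simp; linarith), Real.rpow_one, add_sub_cancel_right]
  gcongr
  exact hC x

theorem WFS_wM_B.exists_le_mul_of_norm_le {w : ℝ → EuclideanSpace ℝ (Fin d) → ℝ}
    (hwM : WFS_wM_B d w) (k : ℕ) {l : ℝ} (hl : 0 < l) :
    ∃ m, 0 < m ∧ ∃ C, 0 < C ∧
      ∀ z u : EuclideanSpace ℝ (Fin d), ‖u‖ ≤ k → w l (z + u) ≤ C * w m z := by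
  induction k generalizing l with
  | zero =>
    refine ⟨l, hl, 1, one_pos, fun z u hu => ?_⟩
    simp [norm_le_zero_iff.mp (by exact_mod_cast hu)]
  | succ k ih =>
    obtain ⟨m₁, hm₁, C₁, hC₁, h₁⟩ := hwM l hl
    obtain ⟨m, hm, C₂, hC₂, h₂⟩ := ih hm₁
    refine ⟨m, hm, C₁ * C₂, mul_pos hC₁ hC₂, fun z u hu => ?_⟩
    have hk : (0 : ℝ) < k + 1 := by positivity
    have hstep : ((k : ℝ) + 1)⁻¹ * ‖u‖ ≤ 1 := by
      rw [inv_mul_le_iff₀ hk, mul_one]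
      exact_mod_cast hu
    have hsplit : z + u = (z + ((k : ℝ) * ((k : ℝ) + 1)⁻¹) • u) + ((k : ℝ) + 1)⁻¹ • u := by
      rw [add_assoc, ← add_smul, ← add_one_mul, mul_inv_cancel₀ hk.ne', one_smul]
    calc w l (z + u) ≤ C₁ * w m₁ (z + ((k : ℝ) * ((k : ℝ) + 1)⁻¹) • u) := by
          rw [hsplit]
          refine h₁ _ _ ?_
          rwa [norm_smul, Real.norm_of_nonneg (by positivity)]
      _ ≤ C₁ * (C₂ * w m z) := by
          refine mul_le_mul_of_nonneg_left (h₂ _ _ ?_) hC₁.le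
          rw [norm_smul, Real.norm_of_nonneg (by positivity), mul_assoc]
          calc (k : ℝ) * (((k : ℝ) + 1)⁻¹ * ‖u‖) ≤ k * 1 := by gcongr
            _ = k := mul_one _
      _ = C₁ * C₂ * w m z := by ring

theorem norm_toLp_le_of_mem_Icc {u : Fin d → ℝ} (hu : u ∈ Set.Icc (0 : Fin d → ℝ) 1) :
    ‖(WithLp.toLp 2 u : EuclideanSpace ℝ (Fin d))‖ ≤ d := by
  rw [EuclideanSpace.norm_eq, Real.sqrt_le_left (Nat.cast_nonneg d)]
  calc ∑ i, ‖u i‖ ^ 2 ≤ ∑ _i : Fin d, (1 : ℝ) := by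
        refine Finset.sum_le_sum fun i _ => ?_
        rw [Real.norm_of_nonneg (hu.1 i)]
        exact pow_le_one₀ (hu.1 i) (hu.2 i)
    _ = d := by simp
    _ ≤ (d : ℝ) ^ 2 := by exact_mod_cast Nat.le_self_pow two_ne_zero d

theorem IsWFS.exists_memLp_div {w : ℝ → EuclideanSpace ℝ (Fin d) → ℝ} (hW : IsWFS d w)
    (hwM : WFS_wM_B d w) (hN : WFS_N_B d w) {l : ℝ} (hl : 0 < l) :
    ∃ m, 0 < m ∧ m ≤ l ∧ ∀ p : ℝ≥0∞, 1 ≤ p → MemLp (fun x => w l x / w m x) p volume := by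
  obtain ⟨m₁, hm₁, hint⟩ := hN l hl
  obtain ⟨m₂, hm₂, C, hC0, hC⟩ := hwM l hl
  set m := min m₁ (min m₂ l)
  have hm : 0 < m := lt_min hm₁ (lt_min hm₂ hl)
  have hpos : ∀ n, 0 < n → ∀ x, 0 < w n x := fun n hn x => one_pos.trans_le (hW.one_le n hn x)
  have hratio : ∀ x, ‖w l x / w m x‖ = w l x / w m x := fun x =>
    Real.norm_of_nonneg (div_nonneg (hpos l hl x).le (hpos m hm x).le)
  refine ⟨m, hm, (min_le_right _ _).trans (min_le_right _ _), fun p hp => ?_⟩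
  refine memLp_of_integrable_of_bound ?_ (C := C) (fun x => ?_) hp
  · refine hint.mono
      ((hW.cont l hl).div (hW.cont m hm) fun x => (hpos m hm x).ne').aestronglyMeasurable
      (ae_of_all _ fun x => ?_)
    rw [hratio, Real.norm_of_nonneg (div_nonneg (hpos l hl x).le (hpos m₁ hm₁ x).le)]
    exact div_le_div_of_nonneg_left (hpos l hl x).le (hpos m₁ hm₁ x)
      (hW.mono m m₁ hm (min_le_left _ _) x)
  · rw [hratio, div_le_iff₀ (hpos m hm x)]
    calc w l x = w l (x + 0) := by rw [add_zero]
      _ ≤ C * w m₂ x := hC x 0 (by simp)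
      _ ≤ C * w m x := by
        gcongr
        exact hW.mono m m₂ hm ((min_le_right _ _).trans (min_le_left _ _)) x

end WeightFunctions

section WeightSequences

variable {d : ℕ} {M : ℝ → (Fin d → ℕ) → ℝ}

theorem exists_eq_add_single_of_ne_zero {β : Fin d → ℕ} (hβ : β ≠ 0) :
    ∃ (j : Fin d) (β' : Fin d → ℕ), β = β' + Pi.single j 1 ∧ ∑ i, β' i + 1 = ∑ i, β i := by
  obtain ⟨j, hj⟩ := Function.ne_iff.mp hβ
  have hle : (Pi.single j 1 : Fin d → ℕ) ≤ β := fun i => by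
    rcases eq_or_ne i j with rfl | hij
    · simpa [Nat.one_le_iff_ne_zero] using hj
    · simp [hij]
  refine ⟨j, β - Pi.single j 1, (tsub_add_cancel_of_le hle).symm, ?_⟩
  conv_rhs => rw [← tsub_add_cancel_of_le hle]
  simp [Finset.sum_add_distrib]

/-- (𝔐.2)' loses a factor `H^{|α|}` in one step; (L), applied at the multi-index `α + e_j`,
wins it back. -/
theorem exists_le_mul_add_single (hM : IsWSS d M) (hL : WSS_L_B d M) (hM2 : WSS_M2_B d M)
    {l : ℝ} (hl : 0 < l) :
    ∃ m, 0 < m ∧ m ≤ l ∧ ∃ C, 0 < C ∧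
      ∀ (α : Fin d → ℕ) (j : Fin d), M m (α + Pi.single j 1) ≤ C * M l α := by
  obtain ⟨m₁, hm₁, C₁, hC₁, H, hH, h₁⟩ := hM2 l hl
  obtain ⟨m₂, hm₂, C₂, hC₂, h₂⟩ := hL H hH m₁ hm₁
  refine ⟨min m₂ l, lt_min hm₂ hl, min_le_right _ _, C₂ * C₁ / H, by positivity,
    fun α j => ?_⟩
  have hsum : ∑ i, (α + Pi.single j 1 : Fin d → ℕ) i = ∑ i, α i + 1 := by
    simp [Finset.sum_add_distrib]
  have hpow : H ^ (∑ i, α i + 1) * M m₂ (α + Pi.single j 1) ≤ H ^ (∑ i, α i) * (C₂ * C₁ * M l α) :=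
    calc H ^ (∑ i, α i + 1) * M m₂ (α + Pi.single j 1)
        ≤ C₂ * M m₁ (α + Pi.single j 1) := hsum ▸ h₂ (α + Pi.single j 1)
      _ ≤ C₂ * (C₁ * H ^ (∑ i, α i) * M l α) := by gcongr; exact h₁ α j
      _ = H ^ (∑ i, α i) * (C₂ * C₁ * M l α) := by ring
  have key : H * M m₂ (α + Pi.single j 1) ≤ C₂ * C₁ * M l α :=
    le_of_mul_le_mul_left (by rwa [← mul_assoc, ← pow_succ]) (pow_pos hH _)
  calc M (min m₂ l) (α + Pi.single j 1) ≤ M m₂ (α + Pi.single j 1) :=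
        hM.mono _ _ (lt_min hm₂ hl) (min_le_left _ _) _
    _ ≤ C₂ * C₁ / H * M l α := by
        rw [div_mul_eq_mul_div, le_div_iff₀ hH, mul_comm]
        exact key

theorem exists_le_mul_add_of_sum_le (hM : IsWSS d M) (hL : WSS_L_B d M) (hM2 : WSS_M2_B d M)
    (k : ℕ) {l : ℝ} (hl : 0 < l) :
    ∃ m, 0 < m ∧ m ≤ l ∧ ∃ C, 0 < C ∧
      ∀ α β : Fin d → ℕ, ∑ i, β i ≤ k → M m (α + β) ≤ C * M l α := by
  induction k with
  | zero =>
    refine ⟨l, hl, le_rfl, 1, one_pos, fun α β hβ => ?_⟩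
    have : β = 0 := funext fun i => Finset.sum_eq_zero_iff.mp (Nat.le_zero.mp hβ) i
      (Finset.mem_univ i)
    simp [this]
  | succ k ih =>
    obtain ⟨m₁, hm₁, hm₁l, C₁, hC₁, h₁⟩ := ih
    obtain ⟨m, hm, hmm₁, C₂, hC₂, h₂⟩ := exists_le_mul_add_single hM hL hM2 hm₁
    refine ⟨m, hm, hmm₁.trans hm₁l, max C₁ (C₂ * C₁), by positivity, fun α β hβ => ?_⟩
    have hMl := (hM.pos l hl α).le
    rcases eq_or_ne β 0 with rfl | hβ0
    · calc M m (α + 0) ≤ M m₁ (α + 0) := hM.mono _ _ hm hmm₁ _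
        _ ≤ C₁ * M l α := h₁ α 0 (by simp)
        _ ≤ max C₁ (C₂ * C₁) * M l α := by gcongr; exact le_max_left _ _
    · obtain ⟨j, β', rfl, hsum⟩ := exists_eq_add_single_of_ne_zero hβ0
      calc M m (α + (β' + Pi.single j 1)) ≤ C₂ * M m₁ (α + β') := by
            rw [← add_assoc]; exact h₂ _ j
        _ ≤ C₂ * (C₁ * M l α) := by gcongr; exact h₁ α β' (by omega)
        _ ≤ max C₁ (C₂ * C₁) * M l α := by
            rw [← mul_assoc]; gcongr; exact le_max_right _ _

end WeightSequences

section SeminormBounds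

variable {d : ℕ} {M : (Fin d → ℕ) → ℝ} {w : EuclideanSpace ℝ (Fin d) → ℝ} {q : ℝ≥0∞}
  {φ : EuclideanSpace ℝ (Fin d) → ℂ}

theorem gsNorm_le_of_forall {c : ℝ≥0∞}
    (h : ∀ α, eLpNorm (fun x => ‖pdMulti d α φ x‖ * w x) q volume ≤ c * ENNReal.ofReal (M α)) :
    gsNorm d M w q φ ≤ c :=
  iSup_le fun α => ENNReal.div_le_of_le_mul (h α)

theorem eLpNorm_le_gsNorm_mul (hM : ∀ α, 0 < M α) (α : Fin d → ℕ) :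
    eLpNorm (fun x => ‖pdMulti d α φ x‖ * w x) q volume
      ≤ gsNorm d M w q φ * ENNReal.ofReal (M α) :=
  (ENNReal.div_le_iff (by simpa using hM α) ENNReal.ofReal_ne_top).mp
    (le_iSup (fun β => eLpNorm (fun x => ‖pdMulti d β φ x‖ * w x) q volume
      / ENNReal.ofReal (M β)) α)

end SeminormBounds

section Seminorms

open Set

variable {d : ℕ} {M : ℝ → (Fin d → ℕ) → ℝ} {w : ℝ → EuclideanSpace ℝ (Fin d) → ℝ}

theorem gsNorm_le_eLpNorm_div_mul_gsNorm (hM : IsWSS d M) (hW : IsWFS d w) {l m : ℝ}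
    (hm : 0 < m) (hml : m ≤ l) (p q r : ℝ≥0∞) [ENNReal.HolderTriple p q r]
    {φ : EuclideanSpace ℝ (Fin d) → ℂ} (hφ : ContDiff ℝ ∞ φ) :
    gsNorm d (M l) (w l) r φ
      ≤ eLpNorm (fun x => w l x / w m x) p volume * gsNorm d (M m) (w m) q φ := by
  have hl := hm.trans_le hml
  have hpos : ∀ x, 0 < w m x := fun x => one_pos.trans_le (hW.one_le m hm x)
  refine gsNorm_le_of_forall fun α => ?_
  have hsplit : (fun x => ‖pdMulti d α φ x‖ * w l x)
      = (fun x => w l x / w m x) • fun x => ‖pdMulti d α φ x‖ * w m x := by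
    funext x
    change _ = w l x / w m x * (‖pdMulti d α φ x‖ * w m x)
    field_simp [(hpos x).ne']
  calc eLpNorm (fun x => ‖pdMulti d α φ x‖ * w l x) r volume
      ≤ eLpNorm (fun x => w l x / w m x) p volume
          * eLpNorm (fun x => ‖pdMulti d α φ x‖ * w m x) q volume := by
        rw [hsplit]
        exact eLpNorm_smul_le_mul_eLpNorm
          ((contDiff_pdMulti hφ α).continuous.norm.mul (hW.cont m hm)).aestronglyMeasurable
          ((hW.cont l hl).div (hW.cont m hm) fun x => (hpos x).ne').aestronglyMeasurable
    _ ≤ eLpNorm (fun x => w l x / w m x) p volume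
          * (gsNorm d (M m) (w m) q φ * ENNReal.ofReal (M m α)) := by
        gcongr
        exact eLpNorm_le_gsNorm_mul (hM.pos m hm) α
    _ ≤ eLpNorm (fun x => w l x / w m x) p volume * gsNorm d (M m) (w m) q φ
          * ENNReal.ofReal (M l α) := by
        rw [mul_assoc]
        gcongr
        exact hM.mono m l hm hml α

theorem exists_gsNorm_top_le_mul_gsNorm_one (hM : IsWSS d M) (hL : WSS_L_B d M)
    (hM2 : WSS_M2_B d M) (hW : IsWFS d w) (hwM : WFS_wM_B d w) {l : ℝ} (hl : 0 < l) :
    ∃ m, 0 < m ∧ ∃ K : ℝ≥0, ∀ φ : EuclideanSpace ℝ (Fin d) → ℂ, ContDiff ℝ ∞ φ →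
      gsNorm d (M l) (w l) ⊤ φ ≤ K * gsNorm d (M m) (w m) 1 φ := by
  obtain ⟨mw, hmw, Cw, hCw, hwShift⟩ := hwM.exists_le_mul_of_norm_le d hl
  obtain ⟨mM, hmM, -, CM, hCM, hMShift⟩ := exists_le_mul_add_of_sum_le hM hL hM2 d hl
  set m := min mw mM
  have hm : 0 < m := lt_min hmw hmM
  refine ⟨m, hm, 2 ^ d * Cw.toNNReal * CM.toNNReal, fun φ hφ => ?_⟩
  set gs := gsNorm d (M m) (w m) 1 φ
  have hweight : ∀ x, ∀ u ∈ Icc (0 : Fin d → ℝ) 1, w l x ≤ Cw * w m (x + WithLp.toLp 2 u) := by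
    intro x u hu
    calc w l x = w l ((x + WithLp.toLp 2 u) + -WithLp.toLp 2 u) := by rw [add_neg_cancel_right]
      _ ≤ Cw * w mw (x + WithLp.toLp 2 u) :=
        hwShift _ _ (by rw [norm_neg]; exact norm_toLp_le_of_mem_Icc hu)
      _ ≤ Cw * w m (x + WithLp.toLp 2 u) := by
        gcongr
        exact hW.mono m mw hm (min_le_left _ _) _
  refine gsNorm_le_of_forall fun α => ?_
  have hterm : ∀ T : Finset (Fin d),
      eLpNorm (fun y => ‖pdMulti d (indicatorMultiIndex T) (pdMulti d α φ) y‖ * w m y) 1 volume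
        ≤ gs * ENNReal.ofReal (CM * M l α) := by
    intro T
    rw [← pdMulti_add hφ]
    refine (eLpNorm_le_gsNorm_mul (hM.pos m hm) _).trans ?_
    gcongr
    calc M m (indicatorMultiIndex T + α) ≤ M mM (α + indicatorMultiIndex T) := by
          rw [add_comm]; exact hM.mono m mM hm (min_le_right _ _) _
      _ ≤ CM * M l α := hMShift α _ (sum_indicatorMultiIndex_le T)
  rw [eLpNorm_exponent_top]
  refine essSup_le_of_ae_le _ (ae_of_all _ fun x => ?_)
  have hwl := (one_pos.trans_le (hW.one_le l hl x)).le
  calc ‖‖pdMulti d α φ x‖ * w l x‖ₑ = ENNReal.ofReal (w l x) * ‖pdMulti d α φ x‖ₑ := by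
        rw [enorm_mul, enorm_norm, Real.enorm_of_nonneg hwl, mul_comm]
    _ ≤ ENNReal.ofReal Cw * ∑ T ∈ (Finset.univ : Finset (Fin d)).powerset,
          eLpNorm (fun y => ‖pdMulti d (indicatorMultiIndex T) (pdMulti d α φ) y‖ * w m y) 1
            volume :=
        ofReal_mul_enorm_le_sum_eLpNorm (contDiff_pdMulti hφ α) (hW.cont m hm)
          (fun y => (one_pos.trans_le (hW.one_le m hm y)).le) hweight x
    _ ≤ ENNReal.ofReal Cw * ∑ _T ∈ (Finset.univ : Finset (Fin d)).powerset,
          gs * ENNReal.ofReal (CM * M l α) := by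
        gcongr with T
        exact hterm T
    _ = ↑(2 ^ d * Cw.toNNReal * CM.toNNReal) * gs * ENNReal.ofReal (M l α) := by
        rw [Finset.sum_const, Finset.card_powerset, Finset.card_univ, Fintype.card_fin,
          nsmul_eq_mul, ENNReal.ofReal_mul hCM.le]
        push_cast [ENNReal.ofReal]
        ring

theorem exists_gsNorm_le_mul_gsNorm (hM : IsWSS d M) (hL : WSS_L_B d M) (hM2 : WSS_M2_B d M)
    (hW : IsWFS d w) (hwM : WFS_wM_B d w) (hN : WFS_N_B d w) {q r : ℝ≥0∞} (hq : 1 ≤ q)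
    (hr : 1 ≤ r) {l : ℝ} (hl : 0 < l) :
    ∃ m, 0 < m ∧ ∃ K : ℝ≥0, ∀ φ : EuclideanSpace ℝ (Fin d) → ℂ, ContDiff ℝ ∞ φ →
      gsNorm d (M l) (w l) r φ ≤ K * gsNorm d (M m) (w m) q φ := by
  obtain ⟨m₁, hm₁, hm₁l, hratio₁⟩ := hW.exists_memLp_div hwM hN hl
  obtain ⟨m₂, hm₂, K, hK⟩ := exists_gsNorm_top_le_mul_gsNorm_one hM hL hM2 hW hwM hm₁
  obtain ⟨m, hm, hmm₂, hratio₂⟩ := hW.exists_memLp_div hwM hN hm₂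
  have := ENNReal.HolderConjugate.conjExponent hq
  set q' := q.conjExponent
  set c₁ := eLpNorm (fun x => w l x / w m₁ x) r volume
  set c₂ := eLpNorm (fun x => w m₂ x / w m x) q' volume
  have hc₁ : c₁ ≠ ⊤ := (hratio₁ r hr).eLpNorm_ne_top
  have hc₂ : c₂ ≠ ⊤ := (hratio₂ q' (ENNReal.HolderTriple.le q' q 1)).eLpNorm_ne_top
  refine ⟨m, hm, c₁.toNNReal * K * c₂.toNNReal, fun φ hφ => ?_⟩
  calc gsNorm d (M l) (w l) r φ ≤ c₁ * gsNorm d (M m₁) (w m₁) ⊤ φ :=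
        gsNorm_le_eLpNorm_div_mul_gsNorm hM hW hm₁ hm₁l r ⊤ r hφ
    _ ≤ c₁ * (K * gsNorm d (M m₂) (w m₂) 1 φ) := by gcongr; exact hK φ hφ
    _ ≤ c₁ * (K * (c₂ * gsNorm d (M m) (w m) q φ)) := by
        gcongr
        exact gsNorm_le_eLpNorm_div_mul_gsNorm hM hW hm hmm₂ q' q 1 hφ
    _ = ↑(c₁.toNNReal * K * c₂.toNNReal) * gsNorm d (M m) (w m) q φ := by
        push_cast [ENNReal.coe_toNNReal hc₁, ENNReal.coe_toNNReal hc₂]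
        ring

theorem gsBeurling_of_gsBeurling (hM : IsWSS d M) (hL : WSS_L_B d M) (hM2 : WSS_M2_B d M)
    (hW : IsWFS d w) (hwM : WFS_wM_B d w) (hN : WFS_N_B d w) {q r : ℝ≥0∞} (hq : 1 ≤ q)
    (hr : 1 ≤ r) {φ : EuclideanSpace ℝ (Fin d) → ℂ} (hφ : gsBeurling d M w q φ) :
    gsBeurling d M w r φ := by
  refine ⟨hφ.1, fun l hl => ?_⟩
  obtain ⟨m, hm, K, hK⟩ := exists_gsNorm_le_mul_gsNorm hM hL hM2 hW hwM hN hq hr hl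
  exact (hK φ hφ.1).trans_lt (ENNReal.mul_lt_top ENNReal.coe_lt_top (hφ.2 m hm))

end Seminorms

/-- Under (L), (𝔐.2)', (wM) and (N), the classes `𝒮^{(𝔐)}_{(𝒲),q}` coincide for all
`q ∈ [1,∞]`, with continuous inclusions at the level of the defining seminorms. -/
theorem stmt12 (d : ℕ) (M : ℝ → (Fin d → ℕ) → ℝ) (w : ℝ → EuclideanSpace ℝ (Fin d) → ℝ)
    (hM : IsWSS d M) (hL : WSS_L_B d M) (hM2 : WSS_M2_B d M)
    (hW : IsWFS d w) (hwM : WFS_wM_B d w) (hN : WFS_N_B d w) :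
    ∀ q r : ℝ≥0∞, 1 ≤ q → 1 ≤ r →
      (∀ φ, gsBeurling d M w q φ ↔ gsBeurling d M w r φ) ∧
      (∀ l, 0 < l → ∃ m, 0 < m ∧ ∃ C, 0 < C ∧
        ∀ φ : EuclideanSpace ℝ (Fin d) → ℂ, ContDiff ℝ (⊤ : ℕ∞) φ →
          gsNorm d (M m) (w m) q φ < ⊤ →
          gsNorm d (M l) (w l) r φ ≤ ENNReal.ofReal C * gsNorm d (M m) (w m) q φ) := by
  intro q r hq hr
  refine ⟨fun φ => ⟨gsBeurling_of_gsBeurling hM hL hM2 hW hwM hN hq hr,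
    gsBeurling_of_gsBeurling hM hL hM2 hW hwM hN hr hq⟩, fun l hl => ?_⟩
  obtain ⟨m, hm, K, hK⟩ := exists_gsNorm_le_mul_gsNorm hM hL hM2 hW hwM hN hq hr hl
  refine ⟨m, hm, K + 1, by positivity, fun φ hφ _ => (hK φ hφ).trans ?_⟩
  gcongr
  rw [← ENNReal.ofReal_coe_nnreal]
  gcongr
  linarith
end

section
/- Let 𝔐 = (M^λ)_{λ>0} be a weight sequence system on ℝ^d satisfying {L} and {𝔐.2}', and let 𝒲 = (w^λ)_{λ>0} be a weight function system on ℝ^d satisfying {wM} and {N}. Then a smooth function φ : ℝ^d → ℂ belongs to the Roumieu Gelfand–Shilov class 𝒮^{{𝔐}}_{{𝒲}} (that is, there exists λ > 0 with sup_{α∈ℕ^d} sup_{x∈ℝ^d} |∂^α φ(x)| w^λ(x)/M^λ_α < ∞) if and only if for every family (M_α)_{α∈ℕ^d} of positive reals with sup_{α} M^λ_α/M_α < ∞ for all λ > 0, and every nonnegative upper semicontinuous function w on ℝ^d with sup_{x} w(x)/w^λ(x) < ∞ for all λ > 0, one has sup_{α∈ℕ^d} sup_{x∈ℝ^d} |∂^α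 φ(x)| w(x)/M_α < ∞. -/
open MeasureTheory Filter ENNReal Asymptotics

/-!
Only `←` needs an argument. If `φ` lies in no step `λ`, pick `(α_n, x_n)` with
`|∂^{α_n} φ(x_n)| w^{n+1}(x_n) / M^{n+1}_{α_n} > n`. For a level function `h` with `h(α_n) ≤ n`,
`h(x_n) ≤ n` and finite (resp. compact) sublevel sets, the diagonal weights `M_α := M^{h(α)+1}_α`
and `w(x) := w^{h(x)+1}(x)` lie in the maximal Nachbin families, since `M^λ ≤ M` and `w ≤ w^λ`
outside a sublevel set; `w` is upper semicontinuous because `h` is lower semicontinuous. The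
seminorm they define is at least `n` at `(α_n, x_n)`.
-/

open Topology

theorem mul_div_le_of_div_le {a b b' c c' C C₁ C₂ : ℝ} (ha : 0 ≤ a) (hb : 0 < b) (hb' : 0 ≤ b')
    (hc : 0 < c) (hc' : 0 < c') (h : a * b / c ≤ C) (h₂ : b' / b ≤ C₂) (h₁ : c / c' ≤ C₁) :
    a * b' / c' ≤ C * C₂ * C₁ := by
  have hC : 0 ≤ C := (by positivity : 0 ≤ a * b / c).trans h
  have hratio : 0 ≤ b' / b := by positivity
  calc a * b' / c' = a * b / c * (b' / b) * (c / c') := by field_simp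
    _ ≤ C * C₂ * C₁ := mul_le_mul (mul_le_mul h h₂ hratio hC) h₁ (by positivity)
        (mul_nonneg hC (hratio.trans h₂))

theorem exists_index_le_of_seq {E : Type*} (s : E → ℕ) (X : ℕ → E) :
    ∃ h : E → ℕ, (∀ n, h (X n) ≤ n) ∧ ∀ N, ∃ r, ∀ x, h x ≤ N ↔ s x ≤ r := by
  classical
  -- `h x` is the first `k` with `s x ≤ ρ k`, for a monotone `ρ` that has `s (X n) ≤ ρ n`.
  set ρ : ℕ → ℕ := fun k => k + ∑ n ∈ Finset.range (k + 1), s (X n)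
  have hρ : Monotone ρ := fun a b hab =>
    add_le_add hab (Finset.sum_le_sum_of_subset (Finset.range_subset_range.2 (by omega)))
  have hex : ∀ x, ∃ k, s x ≤ ρ k := fun x => ⟨s x, Nat.le_add_right _ _⟩
  refine ⟨fun x => Nat.find (hex x), fun n => Nat.find_min' _ ?_, fun N => ⟨ρ N, fun x => ?_⟩⟩
  · show s (X n) ≤ n + ∑ m ∈ Finset.range (n + 1), s (X m)
    exact (Finset.single_le_sum (f := fun m => s (X m)) (fun _ _ => Nat.zero_le _)
      (Finset.self_mem_range_succ n)).trans (Nat.le_add_left _ _)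
  · rw [Nat.find_le_iff]
    exact ⟨fun ⟨m, hm, hx⟩ => hx.trans (hρ hm), fun hx => ⟨N, le_rfl, hx⟩⟩

theorem exists_div_apply_index_le {ι : Type*} {M : ℝ → ι → ℝ}
    (hpos : ∀ l, 0 < l → ∀ α, 0 < M l α) (hmono : ∀ l m, 0 < l → l ≤ m → ∀ α, M l α ≤ M m α)
    {h : ι → ℕ} (hfin : ∀ N, {α | h α ≤ N}.Finite) {l : ℝ} (hl : 0 < l) :
    ∃ C, ∀ α, M l α / M (h α + 1) α ≤ C := by
  obtain ⟨B, hB⟩ := ((hfin ⌈l⌉₊).image fun α => M l α / M 1 α).bddAbove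
  refine ⟨max 1 B, fun α => ?_⟩
  rcases le_or_gt l (h α + 1) with hle | hlt
  · exact ((div_le_one (hpos _ (by positivity) α)).2 (hmono l _ hl hle α)).trans (le_max_left _ _)
  · have hα : h α ≤ ⌈l⌉₊ := by exact_mod_cast (by linarith : (h α : ℝ) ≤ l).trans (Nat.le_ceil l)
    calc M l α / M (h α + 1) α ≤ M l α / M 1 α :=
          div_le_div_of_nonneg_left (hpos l hl α).le (hpos 1 one_pos α)
            (hmono 1 _ one_pos (by simp) α)
      _ ≤ B := hB ⟨α, hα, rfl⟩
      _ ≤ max 1 B := le_max_right _ _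

theorem exists_dominating_seq_le_of_seq {ι : Type*} [Countable ι] {M : ℝ → ι → ℝ}
    (hpos : ∀ l, 0 < l → ∀ α, 0 < M l α) (hmono : ∀ l m, 0 < l → l ≤ m → ∀ α, M l α ≤ M m α)
    (A : ℕ → ι) :
    ∃ MM : ι → ℝ, (∀ α, 0 < MM α) ∧ (∀ l, 0 < l → ∃ C, ∀ α, M l α / MM α ≤ C) ∧
      ∀ n : ℕ, MM (A n) ≤ M (n + 1) (A n) := by
  obtain ⟨f, hf⟩ := Countable.exists_injective_nat ι
  obtain ⟨h, hA, hlevel⟩ := exists_index_le_of_seq f A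
  have hfin : ∀ N, {α | h α ≤ N}.Finite := fun N => by
    obtain ⟨r, hr⟩ := hlevel N
    exact ((Set.finite_Iic r).preimage hf.injOn).subset fun α hα => (hr α).1 hα
  exact ⟨fun α => M (h α + 1) α, fun α => hpos _ (by positivity) α,
    fun l hl => exists_div_apply_index_le hpos hmono hfin hl,
    fun n => hmono _ _ (by positivity) (by exact_mod_cast Nat.succ_le_succ (hA n)) _⟩

section WeightFunction

variable {E : Type*} [TopologicalSpace E] {w : ℝ → E → ℝ} {h : E → ℕ}

theorem upperSemicontinuous_apply_index (hcont : ∀ l, 0 < l → Continuous (w l))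
    (hanti : ∀ m l, 0 < m → m ≤ l → ∀ x, w l x ≤ w m x) (hh : LowerSemicontinuous h) :
    UpperSemicontinuous fun x => w (h x + 1) x := by
  intro x₀ y hy
  have hlevel : ∀ᶠ x in 𝓝 x₀, h x₀ ≤ h x := by
    rcases Nat.eq_zero_or_pos (h x₀) with h0 | h0
    · simp [h0]
    · filter_upwards [hh x₀ (h x₀ - 1) (by omega)] with x hx
      omega
  filter_upwards [hlevel, (hcont _ (by positivity)).continuousAt.eventually_lt
    continuousAt_const hy] with x hx hlt
  exact (hanti _ _ (by positivity) (by exact_mod_cast Nat.succ_le_succ hx) x).trans_lt hlt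

theorem exists_apply_index_div_le (hcont : Continuous (w 1)) (hone : ∀ l, 0 < l → ∀ x, 1 ≤ w l x)
    (hanti : ∀ m l, 0 < m → m ≤ l → ∀ x, w l x ≤ w m x)
    (hh : ∀ N, IsCompact {x | h x ≤ N}) {l : ℝ} (hl : 0 < l) :
    ∃ C, ∀ x, w (h x + 1) x / w l x ≤ C := by
  obtain ⟨B, hB⟩ := (hh ⌈l⌉₊).bddAbove_image hcont.continuousOn
  refine ⟨max 1 B, fun x => ?_⟩
  have hwl := hone l hl x
  rcases le_or_gt l (h x + 1) with hle | hlt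
  · exact ((div_le_one (by linarith)).2 (hanti l _ hl hle x)).trans (le_max_left _ _)
  · have hx : h x ≤ ⌈l⌉₊ := by exact_mod_cast (by linarith : (h x : ℝ) ≤ l).trans (Nat.le_ceil l)
    calc w (h x + 1) x / w l x ≤ w (h x + 1) x :=
          div_le_self (zero_le_one.trans (hone _ (by positivity) x)) hwl
      _ ≤ w 1 x := hanti 1 _ one_pos (by simp) x
      _ ≤ B := hB ⟨x, hx, rfl⟩
      _ ≤ max 1 B := le_max_right _ _

end WeightFunction

theorem exists_dominated_weight_ge_of_seq {E : Type*} [NormedAddCommGroup E] [ProperSpace E]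
    {w : ℝ → E → ℝ} (hcont : ∀ l, 0 < l → Continuous (w l)) (hone : ∀ l, 0 < l → ∀ x, 1 ≤ w l x)
    (hanti : ∀ m l, 0 < m → m ≤ l → ∀ x, w l x ≤ w m x) (X : ℕ → E) :
    ∃ ww : E → ℝ, (∀ x, 0 ≤ ww x) ∧ UpperSemicontinuous ww ∧
      (∀ l, 0 < l → ∃ C, ∀ x, ww x / w l x ≤ C) ∧ ∀ n : ℕ, w (n + 1) (X n) ≤ ww (X n) := by
  obtain ⟨h, hX, hlevel⟩ := exists_index_le_of_seq (fun x => ⌈‖x‖⌉₊) X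
  have hball : ∀ N, ∃ r : ℕ, {x | h x ≤ N} = Metric.closedBall 0 r := fun N => by
    obtain ⟨r, hr⟩ := hlevel N
    exact ⟨r, by ext x; simp only [Set.mem_ofPred_eq, hr, Nat.ceil_le, mem_closedBall_zero_iff]⟩
  have hlsc : LowerSemicontinuous h := lowerSemicontinuous_iff_isClosed_preimage.2 fun N => by
    obtain ⟨r, hr⟩ := hball N
    change IsClosed {x | h x ≤ N}
    exact hr ▸ Metric.isClosed_closedBall
  have hcpt : ∀ N, IsCompact {x | h x ≤ N} := fun N => by
    obtain ⟨r, hr⟩ := hball N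
    exact hr ▸ isCompact_closedBall 0 r
  exact ⟨fun x => w (h x + 1) x, fun x => zero_le_one.trans (hone _ (by positivity) x),
    upperSemicontinuous_apply_index hcont hanti hlsc,
    fun l hl => exists_apply_index_div_le (hcont 1 one_pos) hone hanti hcpt hl,
    fun n => hanti _ _ (by positivity) (by exact_mod_cast Nat.succ_le_succ (hX n)) _⟩

theorem stmt17_general (d : ℕ) (M : ℝ → (Fin d → ℕ) → ℝ) (w : ℝ → EuclideanSpace ℝ (Fin d) → ℝ)
    (hM : IsWSS d M) (hW : IsWFS d w) (φ : EuclideanSpace ℝ (Fin d) → ℂ) :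
    (∃ l, 0 < l ∧ ∃ C : ℝ, ∀ (α : Fin d → ℕ) (x : EuclideanSpace ℝ (Fin d)),
      ‖pdMulti d α φ x‖ * w l x / M l α ≤ C) ↔
    (∀ MM : (Fin d → ℕ) → ℝ, (∀ α, 0 < MM α) →
      (∀ l, 0 < l → ∃ C : ℝ, ∀ α, M l α / MM α ≤ C) →
      ∀ ww : EuclideanSpace ℝ (Fin d) → ℝ, (∀ x, 0 ≤ ww x) → UpperSemicontinuous ww →
        (∀ l, 0 < l → ∃ C : ℝ, ∀ x, ww x / w l x ≤ C) →
        ∃ C : ℝ, ∀ (α : Fin d → ℕ) (x : EuclideanSpace ℝ (Fin d)),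
          ‖pdMulti d α φ x‖ * ww x / MM α ≤ C) := by
  constructor
  · rintro ⟨l, hl, C, hC⟩ MM hMM hMMdom ww hww - hwwdom
    obtain ⟨C₁, hC₁⟩ := hMMdom l hl
    obtain ⟨C₂, hC₂⟩ := hwwdom l hl
    exact ⟨C * C₂ * C₁, fun α x => mul_div_le_of_div_le (norm_nonneg _)
      (zero_lt_one.trans_le (hW.one_le l hl x)) (hww x) (hM.pos l hl α) (hMM α) (hC α x) (hC₂ x)
      (hC₁ α)⟩
  · intro hproj
    by_contra hφ
    push Not at hφ
    choose A X hAX using fun n : ℕ => hφ (n + 1) (by positivity) n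
    obtain ⟨MM, hMM, hMMdom, hMMA⟩ := exists_dominating_seq_le_of_seq hM.pos hM.mono A
    obtain ⟨ww, hww, husc, hwwdom, hwwX⟩ :=
      exists_dominated_weight_ge_of_seq hW.cont hW.one_le hW.mono X
    obtain ⟨C, hC⟩ := hproj MM hMM hMMdom ww hww husc hwwdom
    obtain ⟨n, hn⟩ := exists_nat_gt C
    have hdiag : ‖pdMulti d (A n) φ (X n)‖ * w (n + 1) (X n) / M (n + 1) (A n)
        ≤ ‖pdMulti d (A n) φ (X n)‖ * ww (X n) / MM (A n) :=
      div_le_div₀ (mul_nonneg (norm_nonneg _) (hww _)) (by gcongr; exact hwwX n) (hMM _) (hMMA n)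
    linarith [hAX n, hC (A n) (X n)]

/-- Projective description of the Roumieu Gelfand–Shilov class `𝒮^{{𝔐}}_{{𝒲}}`: a smooth `φ`
belongs to it iff `sup_{α,x} |∂^α φ(x)| w(x)/M_α < ∞` for every `M` in the maximal Nachbin
family `V̄(𝔐)` and every `w` in the maximal Nachbin family `V̄(𝒲)`. -/
theorem stmt17 (d : ℕ) (M : ℝ → (Fin d → ℕ) → ℝ) (w : ℝ → EuclideanSpace ℝ (Fin d) → ℝ)
    (hM : IsWSS d M) (hL : WSS_L_R d M) (hM2 : WSS_M2_R d M)
    (hW : IsWFS d w) (hwM : WFS_wM_R d w) (hN : WFS_N_R d w)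
    (φ : EuclideanSpace ℝ (Fin d) → ℂ) (hφ : ContDiff ℝ (⊤ : ℕ∞) φ) :
    (∃ l, 0 < l ∧ ∃ C : ℝ, ∀ (α : Fin d → ℕ) (x : EuclideanSpace ℝ (Fin d)),
      ‖pdMulti d α φ x‖ * w l x / M l α ≤ C) ↔
    (∀ MM : (Fin d → ℕ) → ℝ, (∀ α, 0 < MM α) →
      (∀ l, 0 < l → ∃ C : ℝ, ∀ α, M l α / MM α ≤ C) →
      ∀ ww : EuclideanSpace ℝ (Fin d) → ℝ, (∀ x, 0 ≤ ww x) → UpperSemicontinuous ww →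
        (∀ l, 0 < l → ∃ C : ℝ, ∀ x, ww x / w l x ≤ C) →
        ∃ C : ℝ, ∀ (α : Fin d → ℕ) (x : EuclideanSpace ℝ (Fin d)),
          ‖pdMulti d α φ x‖ * ww x / MM α ≤ C) :=
  stmt17_general d M w hM hW φ
end
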